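/- arXiv:1604.07016 — 5 statements merged into one kernel-verified Lean document; each statement's English description precedes it below -/
import Mathlib

section
/- Let G be a triangle-free finite simple graph with a transitive vertex ordering < and let M be a matching in G. Then the following are equivalent: (1) M is uniquely restricted; (2) there is no alternating cycle of length 4 with respect to M in G; (3) for any two distinct edges e, e' ∈ M, the matching {e, e'} is uniquely restricted in G. -/
/-- The set of vertices matched by a set of edges `M`. -/
def matchedVerts {V : Type*} (M : Set (Sym2 V)) : Set V := {v | ∃ e ∈ M, v ∈ e}

/-- `M` is a matching in the simple graph `G`: a set of edges of `G` no two of which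
share an endpoint. -/
def IsMatchingSet {V : Type*} (G : SimpleGraph V) (M : Set (Sym2 V)) : Prop :=
  M ⊆ G.edgeSet ∧ ∀ e ∈ M, ∀ f ∈ M, e ≠ f → ∀ v : V, v ∈ e → v ∉ f

/-- `M` is a uniquely restricted matching in `G`: a matching such that no other matching
of `G` matches exactly the same set of vertices. -/
def UniquelyRestricted {V : Type*} (G : SimpleGraph V) (M : Set (Sym2 V)) : Prop :=
  IsMatchingSet G M ∧
    ∀ M' : Set (Sym2 V), IsMatchingSet G M' → matchedVerts M' = matchedVerts M → M' = M

/-- The smaller endpoint `l(e)` of an edge `e`. -/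
def eL {V : Type*} [LinearOrder V] (e : Sym2 V) : V :=
  Sym2.lift ⟨fun a b => min a b, fun a b => min_comm a b⟩ e

/-- The larger endpoint `r(e)` of an edge `e`. -/
def eR {V : Type*} [LinearOrder V] (e : Sym2 V) : V :=
  Sym2.lift ⟨fun a b => max a b, fun a b => max_comm a b⟩ e

/-- The linear order on `V` is a proper vertex ordering of `G`:
for `u < v < w`, `uw ∈ E(G)` implies `uv ∈ E(G)` and `vw ∈ E(G)`. -/
def IsProperOrdering {V : Type*} [LinearOrder V] (G : SimpleGraph V) : Prop :=
  ∀ u v w : V, u < v → v < w → G.Adj u w → G.Adj u v ∧ G.Adj v w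

/-- The linear order on `V` is a transitive vertex ordering of `G`. -/
def IsTransitiveOrdering {V : Type*} [LinearOrder V] (G : SimpleGraph V) : Prop :=
  ∀ u v w : V, u < v → v < w →
    ((G.Adj u v → G.Adj v w → G.Adj u w) ∧ (G.Adj u w → G.Adj u v ∨ G.Adj v w))

/-- There is an alternating cycle of length 4 with respect to `M` in `G`. -/
def HasAltC4 {V : Type*} (G : SimpleGraph V) (M : Set (Sym2 V)) : Prop :=
  ∃ u v u' v' : V, u ≠ v ∧ u ≠ u' ∧ u ≠ v' ∧ v ≠ u' ∧ v ≠ v' ∧ u' ≠ v' ∧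
    s(u, v) ∈ M ∧ s(u', v') ∈ M ∧ G.Adj u u' ∧ G.Adj v v'

/-- `G` admits an interval representation by nonempty closed real intervals. -/
def HasIntervalRep {V : Type*} (G : SimpleGraph V) : Prop :=
  ∃ a b : V → ℝ, (∀ v, a v ≤ b v) ∧
    ∀ u v : V, u ≠ v →
      (G.Adj u v ↔ (Set.Icc (a u) (b u) ∩ Set.Icc (a v) (b v)).Nonempty)

/-- The matching `M` starts with the edge `e`. -/
def StartsWith {V : Type*} [LinearOrder V] (M : Set (Sym2 V)) (e : Sym2 V) : Prop :=
  e ∈ M ∧ ∀ f ∈ M, f ≠ e → eL e < eL f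


/-!
In a triangle-free graph a transitive ordering forbids a vertex with neighbours on both sides,
so every edge `xr` has `x < r` with `x` "low" and `r` "high", and a low `x` is adjacent to every
high `s` with `x < s < r` whenever `xr` is an edge.

Swapping the two edges of an alternating 4-cycle gives another matching on the same vertices, so
a uniquely restricted matching has none. Conversely, let `M' ≠ M` match the same vertices and
take `xr ∈ M \ M'` with `r` as large as possible, `yr ∈ M'` and `ys ∈ M`; then `s < r`. If
`x < s`, then `xs` is an edge and `xr, ys` span an alternating 4-cycle. Otherwise `y < s < x`,
and the `M'`-partner `z` of `x` satisfies `x < z < r`, so `yz` is an edge; replacing `yr, xz` in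
`M'` by `xr, yz` gives a matching on the same vertices that is closer to `M`, and we induct on
`|M \ M'|`. The statement about pairs follows because an alternating 4-cycle uses two edges of `M`.
-/

section Ordering

variable {V : Type*} [LinearOrder V] {G : SimpleGraph V}

theorem IsTransitiveOrdering.not_adj_of_adj_of_lt (hord : IsTransitiveOrdering G)
    (htf : G.CliqueFree 3) {u v w : V} (huv : u < v) (hvw : v < w) (hadj : G.Adj u v) :
    ¬ G.Adj v w := fun hadj' =>
  htf {u, v, w} (SimpleGraph.is3Clique_triple_iff.2
    ⟨hadj, (hord u v w huv hvw).1 hadj hadj', hadj'⟩)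

theorem IsTransitiveOrdering.lt_of_adj_of_adj_of_lt (hord : IsTransitiveOrdering G)
    (htf : G.CliqueFree 3) {x r z : V} (hxr : G.Adj x r) (hlt : x < r) (hxz : G.Adj x z) :
    x < z := by
  rcases lt_trichotomy x z with h | rfl | h
  · exact h
  · exact (hxz.ne rfl).elim
  · exact absurd hxr (hord.not_adj_of_adj_of_lt htf h hlt hxz.symm)

theorem IsTransitiveOrdering.lt_of_adj_of_adj_of_lt' (hord : IsTransitiveOrdering G)
    (htf : G.CliqueFree 3) {x r w : V} (hxr : G.Adj x r) (hlt : x < r) (hwr : G.Adj w r) :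
    w < r := by
  rcases lt_trichotomy w r with h | rfl | h
  · exact h
  · exact (hwr.ne rfl).elim
  · exact absurd hwr.symm (hord.not_adj_of_adj_of_lt htf hlt h hxr)

theorem IsTransitiveOrdering.adj_of_lt_of_lt (hord : IsTransitiveOrdering G)
    (htf : G.CliqueFree 3) {x s r w : V} (hxs : x < s) (hsr : s < r) (hxr : G.Adj x r)
    (hws : w < s) (hadj : G.Adj w s) : G.Adj x s :=
  ((hord x s r hxs hsr).2 hxr).resolve_right (hord.not_adj_of_adj_of_lt htf hws hsr hadj)

end Ordering

section Matching

variable {V : Type*} {G : SimpleGraph V} {M : Set (Sym2 V)}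

theorem IsMatchingSet.adj (hM : IsMatchingSet G M) {a b : V} (h : s(a, b) ∈ M) : G.Adj a b :=
  hM.1 h

theorem IsMatchingSet.eq_of_mk_mem (hM : IsMatchingSet G M) {a b c : V} (hb : s(a, b) ∈ M)
    (hc : s(a, c) ∈ M) : b = c := by
  by_contra hne
  exact hM.2 _ hb _ hc (Sym2.congr_right.not.2 hne) a (Sym2.mem_mk_left a b)
    (Sym2.mem_mk_left a c)

theorem IsMatchingSet.mono {M₀ : Set (Sym2 V)} (hM : IsMatchingSet G M) (h : M₀ ⊆ M) :
    IsMatchingSet G M₀ :=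
  ⟨h.trans hM.1, fun e he f hf => hM.2 e (h he) f (h hf)⟩

theorem exists_mk_mem_of_mem_matchedVerts {v : V} (h : v ∈ matchedVerts M) :
    ∃ w, s(v, w) ∈ M := by
  obtain ⟨e, he, hv⟩ := h
  obtain ⟨w, rfl⟩ := Sym2.mem_iff_exists.1 hv
  exact ⟨w, he⟩

theorem HasAltC4.mono {M₀ : Set (Sym2 V)} (h : HasAltC4 G M₀) (hsub : M₀ ⊆ M) :
    HasAltC4 G M := by
  obtain ⟨u, v, u', v', h₁, h₂, h₃, h₄, h₅, h₆, he, he', a, a'⟩ := h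
  exact ⟨u, v, u', v', h₁, h₂, h₃, h₄, h₅, h₆, hsub he, hsub he', a, a'⟩

def swapAlongC4 (M : Set (Sym2 V)) (u v u' v' : V) : Set (Sym2 V) :=
  M \ {s(u, v), s(u', v')} ∪ {s(u, u'), s(v, v')}

theorem matchedVerts_swapAlongC4 {u v u' v' : V} (he : s(u, v) ∈ M) (he' : s(u', v') ∈ M) :
    matchedVerts (swapAlongC4 M u v u' v') = matchedVerts M := by
  ext w
  simp only [matchedVerts, swapAlongC4]
  constructor
  · rintro ⟨e, he | he, hw⟩
    · exact ⟨e, he.1, hw⟩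
    · aesop
  · rintro ⟨e, heM, hw⟩
    by_cases h : e = s(u, v) ∨ e = s(u', v')
    · aesop
    · exact ⟨e, Or.inl ⟨heM, by simpa using h⟩, hw⟩

theorem IsMatchingSet.swapAlongC4 (hM : IsMatchingSet G M) {u v u' v' : V}
    (he : s(u, v) ∈ M) (he' : s(u', v') ∈ M) (huv : u ≠ v) (huv' : u ≠ v')
    (hvu' : v ≠ u') (hu'v' : u' ≠ v')
    (hu : G.Adj u u') (hv : G.Adj v v') :
    IsMatchingSet G (swapAlongC4 M u v u' v') := by
  have hrest : ∀ e ∈ M \ {s(u, v), s(u', v')}, ∀ w ∈ e, w ≠ u ∧ w ≠ v ∧ w ≠ u' ∧ w ≠ v' := by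
    rintro e ⟨heM, hne⟩ w hw
    simp only [Set.mem_insert_iff, Set.mem_singleton_iff, not_or] at hne
    have := hM.2 e heM _ he hne.1 w hw
    have := hM.2 e heM _ he' hne.2 w hw
    simp_all [Sym2.mem_iff]
  refine ⟨?_, ?_⟩
  · rintro e (⟨heM, -⟩ | rfl | rfl)
    exacts [hM.1 heM, hu, hv]
  · rintro e (he₀ | rfl | rfl) f (hf₀ | rfl | rfl) hef w hwe hwf
    · exact hM.2 e he₀.1 f hf₀.1 hef w hwe hwf
    all_goals first
      | exact hef rfl
      | grind

theorem UniquelyRestricted.not_hasAltC4 (h : UniquelyRestricted G M) : ¬ HasAltC4 G M := by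
  rintro ⟨u, v, u', v', huv, -, huv', hvu', -, hu'v', he, he', hu, hv⟩
  have hswap := h.2 _ (h.1.swapAlongC4 he he' huv huv' hvu' hu'v' hu hv)
    (matchedVerts_swapAlongC4 he he')
  have huu' : s(u, u') ∈ M := hswap ▸ Or.inr (Or.inl rfl)
  exact hvu' (h.1.eq_of_mk_mem he huu')

theorem exists_mem_diff_of_matchedVerts_eq {M' : Set (Sym2 V)} (hM' : IsMatchingSet G M')
    (hmv : matchedVerts M' = matchedVerts M) (hne : M' ≠ M) : (M \ M').Nonempty := by
  by_contra hempty
  have hsub : M ⊆ M' := Set.sdiff_eq_empty.1 (Set.not_nonempty_iff_eq_empty.1 hempty)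
  obtain ⟨f, hfM', hfM⟩ := Set.exists_of_ssubset (hsub.ssubset_of_ne hne.symm)
  rcases f with ⟨a, b⟩
  obtain ⟨c, hac⟩ := exists_mk_mem_of_mem_matchedVerts
    (hmv ▸ ⟨_, hfM', Sym2.mem_mk_left a b⟩ : a ∈ matchedVerts M)
  exact hfM (hM'.eq_of_mk_mem (hsub hac) hfM' ▸ hac)

end Matching

section Exchange

variable {V : Type*} [LinearOrder V] {G : SimpleGraph V} {M M' : Set (Sym2 V)}

theorem exists_max_mem_diff [Finite V] (hM : IsMatchingSet G M) (hne : (M \ M').Nonempty) :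
    ∃ x r, x < r ∧ s(x, r) ∈ M ∧ s(x, r) ∉ M' ∧
      ∀ w z, w < z → s(w, z) ∈ M → s(w, z) ∉ M' → z ≤ r := by
  set T : Set V := {r | ∃ x, x < r ∧ s(x, r) ∈ M ∧ s(x, r) ∉ M'}
  have hT : T.Nonempty := by
    obtain ⟨⟨a, b⟩, hab, hab'⟩ := hne
    rcases lt_or_gt_of_ne (hM.adj hab).ne with h | h
    · exact ⟨b, a, h, hab, hab'⟩
    · exact ⟨a, b, h, Sym2.eq_swap ▸ hab, Sym2.eq_swap ▸ hab'⟩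
  obtain ⟨r, ⟨x, hxr, hxrM, hxrM'⟩, hmax⟩ := Set.exists_max_image T id T.toFinite hT
  exact ⟨x, r, hxr, hxrM, hxrM', fun w z hwz h h' => hmax z ⟨w, hwz, h, h'⟩⟩

theorem exists_closer_matching (htf : G.CliqueFree 3) (hord : IsTransitiveOrdering G)
    (hM : IsMatchingSet G M) (hM' : IsMatchingSet G M') (hmv : matchedVerts M' = matchedVerts M)
    {x r y s : V} (hxr : x < r) (hxrM : s(x, r) ∈ M) (hxrM' : s(x, r) ∉ M')
    (hmax : ∀ w z, w < z → s(w, z) ∈ M → s(w, z) ∉ M' → z ≤ r)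
    (hryM' : s(r, y) ∈ M') (hysM : s(y, s) ∈ M) (hys : y < s) (hsx : s < x) :
    ∃ M'', IsMatchingSet G M'' ∧ matchedVerts M'' = matchedVerts M ∧
      M'' ≠ M ∧ M \ M'' ⊂ M \ M' := by
  have hxr_adj := hM.adj hxrM
  obtain ⟨z, hxzM'⟩ := exists_mk_mem_of_mem_matchedVerts
    (hmv ▸ ⟨_, hxrM, Sym2.mem_mk_left x r⟩ : x ∈ matchedVerts M')
  have hzr : z ≠ r := by rintro rfl; exact hxrM' hxzM'
  have hxz : x < z := hord.lt_of_adj_of_adj_of_lt htf hxr_adj hxr (hM'.adj hxzM')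
  obtain ⟨w, hzwM⟩ := exists_mk_mem_of_mem_matchedVerts
    (hmv ▸ ⟨_, hxzM', Sym2.mem_mk_right x z⟩ : z ∈ matchedVerts M)
  have hwzM : s(w, z) ∈ M := Sym2.eq_swap ▸ hzwM
  have hwz : w < z := hord.lt_of_adj_of_adj_of_lt' htf (hM'.adj hxzM') hxz (hM.adj hwzM)
  have hwzM' : s(w, z) ∉ M' := by
    intro h
    obtain rfl := hM'.eq_of_mk_mem (Sym2.eq_swap ▸ hxzM') (Sym2.eq_swap ▸ h)
    exact hzr (hM.eq_of_mk_mem hwzM hxrM)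
  have hzr' : z < r := (hmax w z hwz hwzM hwzM').lt_of_ne hzr
  have hyz : G.Adj y z :=
    hord.adj_of_lt_of_lt htf (by order) hzr' (hM'.adj hryM').symm hxz (hM'.adj hxzM')
  refine ⟨swapAlongC4 M' r y x z,
    hM'.swapAlongC4 hryM' hxzM' (by order) hzr.symm (by order) hxz.ne hxr_adj.symm hyz,
    (matchedVerts_swapAlongC4 hryM' hxzM').trans hmv, ?_, ?_⟩
  · intro h
    have hyzM : s(y, z) ∈ M := h ▸ Or.inr (Or.inr rfl)
    exact (hxz.trans' hsx).ne (hM.eq_of_mk_mem hysM hyzM)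
  · refine (Set.ssubset_iff_of_subset ?_).2 ⟨s(x, r), ⟨hxrM, hxrM'⟩, fun h => h.2 ?_⟩
    · refine fun e ⟨heM, he⟩ => ⟨heM, fun heM' => he (Or.inl ⟨heM', ?_⟩)⟩
      rintro (rfl | rfl)
      · exact (hys.trans hsx).ne (hM.eq_of_mk_mem heM (Sym2.eq_swap ▸ hxrM))
      · exact hzr (hM.eq_of_mk_mem heM hxrM)
    · exact Or.inr (Or.inl Sym2.eq_swap)

theorem hasAltC4_or_exists_closer_matching (htf : G.CliqueFree 3)
    (hord : IsTransitiveOrdering G) (hM : IsMatchingSet G M) (hM' : IsMatchingSet G M')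
    (hmv : matchedVerts M' = matchedVerts M) {x r : V} (hxr : x < r) (hxrM : s(x, r) ∈ M)
    (hxrM' : s(x, r) ∉ M') (hmax : ∀ w z, w < z → s(w, z) ∈ M → s(w, z) ∉ M' → z ≤ r) :
    HasAltC4 G M ∨ ∃ M'', IsMatchingSet G M'' ∧ matchedVerts M'' = matchedVerts M ∧
      M'' ≠ M ∧ M \ M'' ⊂ M \ M' := by
  have hxr_adj := hM.adj hxrM
  obtain ⟨y, hryM'⟩ := exists_mk_mem_of_mem_matchedVerts
    (hmv ▸ ⟨_, hxrM, Sym2.mem_mk_right x r⟩ : r ∈ matchedVerts M')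
  have hyrM' : s(y, r) ∈ M' := Sym2.eq_swap ▸ hryM'
  have hyx : y ≠ x := by rintro rfl; exact hxrM' hyrM'
  have hyr : y < r := hord.lt_of_adj_of_adj_of_lt' htf hxr_adj hxr (hM'.adj hyrM')
  obtain ⟨s, hysM⟩ := exists_mk_mem_of_mem_matchedVerts
    (hmv ▸ ⟨_, hyrM', Sym2.mem_mk_left y r⟩ : y ∈ matchedVerts M)
  have hys : y < s := hord.lt_of_adj_of_adj_of_lt htf (hM'.adj hyrM') hyr (hM.adj hysM)
  have hsr : s ≠ r := by
    rintro rfl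
    exact hyx (hM.eq_of_mk_mem (Sym2.eq_swap ▸ hysM) (Sym2.eq_swap ▸ hxrM))
  have hysM' : s(y, s) ∉ M' := fun h => hsr (hM'.eq_of_mk_mem hyrM' h).symm
  have hsr' : s < r := (hmax y s hys hysM hysM').lt_of_ne hsr
  have hxs : x ≠ s := by
    rintro rfl
    exact hyr.ne (hM.eq_of_mk_mem (Sym2.eq_swap ▸ hysM) hxrM)
  rcases lt_or_gt_of_ne hxs with hxs | hsx
  · refine Or.inl ⟨x, r, s, y, by order, by order, hyx.symm, by order, by order, by order, hxrM,
      Sym2.eq_swap ▸ hysM, ?_, (hM'.adj hyrM').symm⟩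
    exact hord.adj_of_lt_of_lt htf hxs hsr' hxr_adj hys (hM.adj hysM)
  · exact Or.inr (exists_closer_matching htf hord hM hM' hmv hxr hxrM hxrM' hmax hryM' hysM
      hys hsx)

theorem hasAltC4_of_ne [Finite V] (htf : G.CliqueFree 3) (hord : IsTransitiveOrdering G)
    (hM : IsMatchingSet G M) (hM' : IsMatchingSet G M') (hmv : matchedVerts M' = matchedVerts M)
    (hne : M' ≠ M) : HasAltC4 G M := by
  induction hn : (M \ M').ncard using Nat.strong_induction_on generalizing M' with
  | _ n ih =>
  obtain ⟨x, r, hxr, hxrM, hxrM', hmax⟩ :=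
    exists_max_mem_diff hM (exists_mem_diff_of_matchedVerts_eq hM' hmv hne)
  obtain hC4 | ⟨M'', hM'', hmv'', hne'', hlt⟩ :=
    hasAltC4_or_exists_closer_matching htf hord hM hM' hmv hxr hxrM hxrM' hmax
  · exact hC4
  · exact ih _ (hn ▸ Set.ncard_lt_ncard hlt) hM'' hmv'' hne'' rfl

theorem uniquelyRestricted_of_not_hasAltC4 [Finite V] (htf : G.CliqueFree 3)
    (hord : IsTransitiveOrdering G) (hM : IsMatchingSet G M) (h : ¬ HasAltC4 G M) :
    UniquelyRestricted G M :=
  ⟨hM, fun _ hM' hmv => by_contra fun hne => h (hasAltC4_of_ne htf hord hM hM' hmv hne)⟩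

theorem uniquelyRestricted_iff_not_hasAltC4 [Finite V] (htf : G.CliqueFree 3)
    (hord : IsTransitiveOrdering G) (hM : IsMatchingSet G M) :
    UniquelyRestricted G M ↔ ¬ HasAltC4 G M :=
  ⟨UniquelyRestricted.not_hasAltC4, uniquelyRestricted_of_not_hasAltC4 htf hord hM⟩

end Exchange

theorem stmt15 {V : Type*} [Fintype V] [LinearOrder V] (G : SimpleGraph V)
    (htf : G.CliqueFree 3) (hord : IsTransitiveOrdering G)
    (M : Set (Sym2 V)) (hM : IsMatchingSet G M) :
    (UniquelyRestricted G M ↔ ¬ HasAltC4 G M) ∧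
      (UniquelyRestricted G M ↔
        ∀ e ∈ M, ∀ e' ∈ M, e ≠ e' → UniquelyRestricted G {e, e'}) := by
  refine ⟨uniquelyRestricted_iff_not_hasAltC4 htf hord hM, fun hUR e he e' he' _ => ?_,
    fun hpair => (uniquelyRestricted_iff_not_hasAltC4 htf hord hM).2 ?_⟩
  · have hsub : {e, e'} ⊆ M := Set.insert_subset he (Set.singleton_subset_iff.2 he')
    exact uniquelyRestricted_of_not_hasAltC4 htf hord (hM.mono hsub)
      fun hC4 => hUR.not_hasAltC4 (hC4.mono hsub)
  · rintro ⟨u, v, u', v', huv, huu', huv', hvu', hvv', hu'v', he, he', hu, hv⟩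
    have hne : s(u, v) ≠ s(u', v') := by rw [Ne, Sym2.eq_iff]; tauto
    exact (hpair _ he _ he' hne).not_hasAltC4 ⟨u, v, u', v', huv, huu', huv', hvu', hvv', hu'v',
      Or.inl rfl, Or.inr rfl, hu, hv⟩
end

section
/- Let G be a triangle-free finite simple graph with a transitive vertex ordering < and let M = {e₁, e₂, …, e_t} be a matching in G whose edges satisfy l(e₁) < l(e₂) < ⋯ < l(e_t). Then M is a uniquely restricted matching in G if and only if for each i ∈ {1, 2, …, t−1}, the pair {e_i, e_{i+1}} is a uniquely restricted matching in G. -/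
section AuxStmt16

variable {V : Type*} [LinearOrder V] {G : SimpleGraph V}

lemma noTwoSided (htf : G.CliqueFree 3) (hord : IsTransitiveOrdering G) {u v w : V}
    (h1 : u < v) (h2 : v < w) (a1 : G.Adj u v) (a2 : G.Adj v w) : False := by
  have h3 := (hord u v w h1 h2).1 a1 a2
  exact htf {u, v, w} (SimpleGraph.is3Clique_triple_iff.mpr ⟨a1, h3, a2⟩)

lemma between (hord : IsTransitiveOrdering G) {u v w : V} (h1 : u < v) (h2 : v < w)
    (a : G.Adj u w) : G.Adj u v ∨ G.Adj v w := (hord u v w h1 h2).2 a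

lemma claimC (htf : G.CliqueFree 3) (hord : IsTransitiveOrdering G)
    {a1 b1 a2 b2 a3 b3 : V}
    (o1 : a1 < b1) (o2 : a2 < b2) (o3 : a3 < b3) (h12 : a1 < a2) (h23 : a2 < a3)
    (e1 : G.Adj a1 b1) (e2 : G.Adj a2 b2) (e3 : G.Adj a3 b3)
    (c13 : G.Adj a1 b3) (c31 : G.Adj a3 b1) (d21 : b2 ≠ b1) (d32 : b3 ≠ b2) :
    (G.Adj a1 b2 ∧ G.Adj a2 b1) ∨ (G.Adj a2 b3 ∧ G.Adj a3 b2) := by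
  have hb1a3 : a3 < b1 := by
    rcases c31.ne.lt_or_gt with h | h
    · exact h
    · exact absurd (noTwoSided htf hord o1 h e1 c31.symm) not_false
  have hadj2b1 : G.Adj a2 b1 := by
    rcases between hord h12 (h23.trans hb1a3) e1 with h | h
    · exact absurd (noTwoSided htf hord h12 o2 h e2) not_false
    · exact h
  rcases d21.lt_or_gt with hb | hb
  · left
    refine ⟨?_, hadj2b1⟩
    rcases between hord (h12.trans o2) hb e1 with h | h
    · exact h
    · exact absurd (noTwoSided htf hord o2 hb e2 h) not_false
  · have ha3b2 : G.Adj a3 b2 := by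
      rcases between hord h23 (hb1a3.trans hb) e2 with h | h
      · exact absurd (noTwoSided htf hord h23 o3 h e3) not_false
      · exact h
    rcases d32.lt_or_gt with hc | hc
    · right
      refine ⟨?_, ha3b2⟩
      rcases between hord (h23.trans o3) hc e2 with h | h
      · exact h
      · exact absurd (noTwoSided htf hord o3 hc e3 h) not_false
    · left
      refine ⟨?_, hadj2b1⟩
      rcases between hord (h12.trans o2) hc c13 with h | h
      · exact h
      · exact absurd (noTwoSided htf hord o2 hc e2 h) not_false

lemma lemG1 (htf : G.CliqueFree 3) (hord : IsTransitiveOrdering G)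
    {ai bi aj bj ak bk : V}
    (oi : ai < bi) (oj : aj < bj) (ok : ak < bk) (hij : ai < aj) (hik : ai < ak)
    (ei : G.Adj ai bi) (ej : G.Adj aj bj) (ek : G.Adj ak bk)
    (hf : G.Adj ai bj) (hg : G.Adj ak bi) (dki : bk ≠ bi) (dji : bj ≠ bi) :
    G.Adj ai bk ∨ G.Adj aj bi ∨ G.Adj ak bj := by
  have hkbi : ak < bi := by
    rcases hg.ne.lt_or_gt with h | h
    · exact h
    · exact absurd (noTwoSided htf hord oi h ei hg.symm) not_false
  rcases dki.lt_or_gt with h1 | h1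
  · left
    rcases between hord (hik.trans ok) h1 ei with h | h
    · exact h
    · exact absurd (noTwoSided htf hord ok h1 ek h) not_false
  · rcases dji.lt_or_gt with h2 | h2
    · right; left
      rcases between hord hij (oj.trans h2) ei with h | h
      · exact absurd (noTwoSided htf hord hij oj h ej) not_false
      · exact h
    · right; right
      rcases between hord hik (hkbi.trans h2) hf with h | h
      · exact absurd (noTwoSided htf hord hik ok h ek) not_false
      · exact h

lemma edge_repr {ed : Sym2 V} (h : ed ∈ G.edgeSet) :
    eL ed < eR ed ∧ G.Adj (eL ed) (eR ed) ∧ ed = s(eL ed, eR ed) := by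
  induction ed using Sym2.ind with
  | _ x y =>
    rw [SimpleGraph.mem_edgeSet] at h
    have hL : eL s(x, y) = min x y := rfl
    have hR : eR s(x, y) = max x y := rfl
    rcases h.ne.lt_or_gt with hlt | hlt
    · rw [hL, hR, min_eq_left hlt.le, max_eq_right hlt.le]
      exact ⟨hlt, h, rfl⟩
    · rw [hL, hR, min_eq_right hlt.le, max_eq_left hlt.le]
      exact ⟨hlt, h.symm, Sym2.eq_swap⟩

end AuxStmt16

theorem stmt16 {V : Type*} [Fintype V] [LinearOrder V] (G : SimpleGraph V)
    (htf : G.CliqueFree 3) (hord : IsTransitiveOrdering G) (t : ℕ) (e : ℕ → Sym2 V)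
    (hmono : ∀ i j, i < j → j < t → eL (e i) < eL (e j))
    (hM : IsMatchingSet G (e '' {i | i < t})) :
    UniquelyRestricted G (e '' {i | i < t}) ↔
      ∀ i, i + 1 < t → UniquelyRestricted G {e i, e (i + 1)} := by
  
  have hmem : ∀ i, i < t → e i ∈ e '' {i | i < t} := fun i hi => ⟨i, hi, rfl⟩
  have hrep : ∀ i, i < t → eL (e i) < eR (e i) ∧ G.Adj (eL (e i)) (eR (e i)) ∧
      e i = s(eL (e i), eR (e i)) := fun i hi => edge_repr (hM.1 (hmem i hi))
  have hAB : ∀ i, i < t → eL (e i) < eR (e i) := fun i hi => (hrep i hi).1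
  have hAdj : ∀ i, i < t → G.Adj (eL (e i)) (eR (e i)) := fun i hi => (hrep i hi).2.1
  have hEq : ∀ i, i < t → e i = s(eL (e i), eR (e i)) := fun i hi => (hrep i hi).2.2
  have hmemA : ∀ i, i < t → eL (e i) ∈ e i := by
    intro i hi
    have h := Sym2.mem_mk_left (eL (e i)) (eR (e i))
    rwa [← hEq i hi] at h
  have hmemB : ∀ i, i < t → eR (e i) ∈ e i := by
    intro i hi
    have h := Sym2.mem_mk_right (eL (e i)) (eR (e i))
    rwa [← hEq i hi] at h
  have hmemiff : ∀ i, i < t → ∀ v, v ∈ e i → v = eL (e i) ∨ v = eR (e i) := by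
    intro i hi v hv
    rw [hEq i hi] at hv
    exact Sym2.mem_iff.mp hv
  have hNe : ∀ i j, i < t → j < t → i ≠ j → e i ≠ e j := by
    intro i j hi hj hij heq
    rcases hij.lt_or_gt with h | h
    · have h2 := hmono i j h hj; rw [heq] at h2; exact lt_irrefl _ h2
    · have h2 := hmono j i h hi; rw [heq] at h2; exact lt_irrefl _ h2
  have hDisj : ∀ i j, i < t → j < t → i ≠ j → ∀ v, v ∈ e i → v ∉ e j :=
    fun i j hi hj hij => hM.2 (e i) (hmem i hi) (e j) (hmem j hj) (hNe i j hi hj hij)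
  have hAA : ∀ i j, i < t → j < t → i ≠ j → eL (e i) ≠ eL (e j) := by
    intro i j hi hj hij h
    exact hDisj i j hi hj hij (eL (e i)) (hmemA i hi) (by rw [h]; exact hmemA j hj)
  have hABne : ∀ i j, i < t → j < t → eL (e i) ≠ eR (e j) := by
    intro i j hi hj h
    by_cases hij : i = j
    · subst hij; exact (hAB i hi).ne h
    · exact hDisj i j hi hj hij (eL (e i)) (hmemA i hi) (by rw [h]; exact hmemB j hj)
  have hBB : ∀ i j, i < t → j < t → i ≠ j → eR (e i) ≠ eR (e j) := by
    intro i j hi hj hij h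
    exact hDisj i j hi hj hij (eR (e i)) (hmemB i hi) (by rw [h]; exact hmemB j hj)
  have hidx : ∀ i j, i < t → j < t → eL (e i) < eL (e j) → i < j := by
    intro i j hi hj h
    by_contra hc
    push_neg at hc
    rcases Nat.lt_or_ge j i with h2 | h2
    · exact absurd h (asymm (hmono j i h2 hi))
    · have h3 : i = j := le_antisymm h2 hc
      subst h3; exact lt_irrefl _ h
  have humatch : ∀ (N : Set (Sym2 V)), IsMatchingSet G N → ∀ x1, x1 ∈ N → ∀ x2, x2 ∈ N →
      ∀ v, v ∈ x1 → v ∈ x2 → x1 = x2 := by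
    intro N hN x1 hx1 x2 hx2 v hv1 hv2
    by_contra hne
    exact hN.2 x1 hx1 x2 hx2 hne v hv1 hv2
  constructor
  · -- easy direction
    intro hUR i hi1
    have hi : i < t := Nat.lt_of_succ_lt hi1
    have hii1 : i ≠ i + 1 := Nat.ne_of_lt (Nat.lt_succ_self i)
    constructor
    · constructor
      · intro x hx
        simp only [Set.mem_insert_iff, Set.mem_singleton_iff] at hx
        rcases hx with rfl | rfl
        · exact hM.1 (hmem i hi)
        · exact hM.1 (hmem (i+1) hi1)
      · intro x hx y hy hxy v hvx hvy
        simp only [Set.mem_insert_iff, Set.mem_singleton_iff] at hx hy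
        rcases hx with rfl | rfl <;> rcases hy with rfl | rfl
        · exact hxy rfl
        · exact hDisj i (i+1) hi hi1 hii1 v hvx hvy
        · exact hDisj (i+1) i hi1 hi (Ne.symm hii1) v hvx hvy
        · exact hxy rfl
    · intro N hN hNverts
      have hN'match : IsMatchingSet G ((e '' {i | i < t}) \ {e i, e (i+1)} ∪ N) := by
        constructor
        · intro x hx
          rcases hx with hx | hx
          · exact hM.1 hx.1
          · exact hN.1 hx
        · intro x hx y hy hxy v hvx hvy
          have cross : ∀ z w, z ∈ (e '' {i | i < t}) \ {e i, e (i+1)} → w ∈ N →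
              ∀ u, u ∈ z → u ∈ w → False := by
            intro z w hz hw u huz huw
            have huP : u ∈ matchedVerts {e i, e (i+1)} := by
              rw [← hNverts]; exact ⟨w, hw, huw⟩
            obtain ⟨z', hz', huz'⟩ := huP
            simp only [Set.mem_insert_iff, Set.mem_singleton_iff] at hz'
            have hzz' : z ≠ z' := by
              rintro rfl
              rcases hz' with rfl | rfl
              · exact hz.2 (Set.mem_insert _ _)
              · exact hz.2 (Set.mem_insert_of_mem _ rfl)
            have hz'M : z' ∈ e '' {i | i < t} := by
              rcases hz' with rfl | rfl
              · exact hmem i hi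
              · exact hmem (i+1) hi1
            exact hM.2 z hz.1 z' hz'M hzz' u huz huz'
          rcases hx with hx | hx
          · rcases hy with hy | hy
            · exact hM.2 x hx.1 y hy.1 hxy v hvx hvy
            · exact cross x y hx hy v hvx hvy
          · rcases hy with hy | hy
            · exact cross y x hy hx v hvy hvx
            · exact hN.2 x hx y hy hxy v hvx hvy
      have hPsub : ({e i, e (i+1)} : Set (Sym2 V)) ⊆ e '' {i | i < t} := by
        intro x hx
        simp only [Set.mem_insert_iff, Set.mem_singleton_iff] at hx
        rcases hx with rfl | rfl
        · exact hmem i hi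
        · exact hmem (i+1) hi1
      have hN'verts : matchedVerts ((e '' {i | i < t}) \ {e i, e (i+1)} ∪ N) =
          matchedVerts (e '' {i | i < t}) := by
        have hu : ∀ (s u : Set (Sym2 V)), matchedVerts (s ∪ u) = matchedVerts s ∪ matchedVerts u := by
          intro s u
          ext v
          constructor
          · rintro ⟨ed, (h | h), hv⟩
            · exact Or.inl ⟨ed, h, hv⟩
            · exact Or.inr ⟨ed, h, hv⟩
          · rintro (⟨ed, h, hv⟩ | ⟨ed, h, hv⟩)
            · exact ⟨ed, Or.inl h, hv⟩
            · exact ⟨ed, Or.inr h, hv⟩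
        rw [hu, hNverts, ← hu, Set.diff_union_of_subset hPsub]
      have hNM := hUR.2 _ hN'match hN'verts
      have hNsub : N ⊆ {e i, e (i+1)} := by
        intro x hx
        have hxM : x ∈ e '' {i | i < t} := by
          rw [← hNM]; exact Set.mem_union_right _ hx
        obtain ⟨m, hm, rfl⟩ := hxM
        have hm : m < t := hm
        have hv : eL (e m) ∈ matchedVerts N := ⟨e m, hx, hmemA m hm⟩
        rw [hNverts] at hv
        obtain ⟨z, hz, hvz⟩ := hv
        simp only [Set.mem_insert_iff, Set.mem_singleton_iff] at hz
        rcases hz with rfl | rfl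
        · by_cases hmi : m = i
          · subst hmi; exact Set.mem_insert _ _
          · exact absurd hvz (hDisj m i hm hi hmi _ (hmemA m hm))
        · by_cases hmi : m = i + 1
          · subst hmi; exact Set.mem_insert_of_mem _ rfl
          · exact absurd hvz (hDisj m (i+1) hm hi1 hmi _ (hmemA m hm))
      have hget : ∀ m, m < t → eL (e m) ∈ matchedVerts N → e m ∈ N := by
        intro m hm hv
        obtain ⟨y, hyN, hvy⟩ := hv
        have hyP := hNsub hyN
        simp only [Set.mem_insert_iff, Set.mem_singleton_iff] at hyP
        rcases hyP with rfl | rfl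
        · by_cases hmi : m = i
          · subst hmi; exact hyN
          · exact absurd hvy (hDisj m i hm hi hmi _ (hmemA m hm))
        · by_cases hmi : m = i + 1
          · subst hmi; exact hyN
          · exact absurd hvy (hDisj m (i+1) hm hi1 hmi _ (hmemA m hm))
      apply Set.Subset.antisymm hNsub
      intro z hz
      simp only [Set.mem_insert_iff, Set.mem_singleton_iff] at hz
      rcases hz with rfl | rfl
      · exact hget i hi (by rw [hNverts]; exact ⟨e i, Set.mem_insert _ _, hmemA i hi⟩)
      · exact hget (i+1) hi1
          (by rw [hNverts]; exact ⟨e (i+1), Set.mem_insert_of_mem _ rfl, hmemA (i+1) hi1⟩)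
  · -- hard direction
    intro hcons
    refine ⟨hM, ?_⟩
    intro M' hm' hv'
    have hnbad1 : ∀ i, i + 1 < t →
        ¬(G.Adj (eL (e i)) (eR (e (i+1))) ∧ G.Adj (eL (e (i+1))) (eR (e i))) := by
      intro i hi1 hbad
      obtain ⟨c1, c2⟩ := hbad
      have hi : i < t := Nat.lt_of_succ_lt hi1
      have hii1 : i ≠ i + 1 := Nat.ne_of_lt (Nat.lt_succ_self i)
      obtain ⟨hpm, hpu⟩ := hcons i hi1
      have hNmatch : IsMatchingSet G {s(eL (e i), eR (e (i+1))), s(eL (e (i+1)), eR (e i))} := by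
        constructor
        · intro x hx
          simp only [Set.mem_insert_iff, Set.mem_singleton_iff] at hx
          rcases hx with rfl | rfl
          · exact G.mem_edgeSet.mpr c1
          · exact G.mem_edgeSet.mpr c2
        · intro x hx y hy hxy v hvx hvy
          simp only [Set.mem_insert_iff, Set.mem_singleton_iff] at hx hy
          rcases hx with rfl | rfl <;> rcases hy with rfl | rfl
          · exact hxy rfl
          · rcases Sym2.mem_iff.mp hvx with h1 | h1 <;> rcases Sym2.mem_iff.mp hvy with h2 | h2
            · exact hAA i (i+1) hi hi1 hii1 (h1.symm.trans h2)
            · exact hABne i i hi hi (h1.symm.trans h2)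
            · exact (hAB (i+1) hi1).ne' (h1.symm.trans h2)
            · exact hBB (i+1) i hi1 hi (Ne.symm hii1) (h1.symm.trans h2)
          · rcases Sym2.mem_iff.mp hvx with h1 | h1 <;> rcases Sym2.mem_iff.mp hvy with h2 | h2
            · exact hAA (i+1) i hi1 hi (Ne.symm hii1) (h1.symm.trans h2)
            · exact hABne (i+1) (i+1) hi1 hi1 (h1.symm.trans h2)
            · exact (hAB i hi).ne' (h1.symm.trans h2)
            · exact hBB i (i+1) hi hi1 hii1 (h1.symm.trans h2)
          · exact hxy rfl
      have hNverts : matchedVerts {s(eL (e i), eR (e (i+1))), s(eL (e (i+1)), eR (e i))} =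
          matchedVerts {e i, e (i+1)} := by
        ext v
        constructor
        · rintro ⟨ed, hed, hv⟩
          simp only [Set.mem_insert_iff, Set.mem_singleton_iff] at hed
          rcases hed with rfl | rfl
          · rcases Sym2.mem_iff.mp hv with rfl | rfl
            · exact ⟨e i, Set.mem_insert _ _, hmemA i hi⟩
            · exact ⟨e (i+1), Set.mem_insert_of_mem _ rfl, hmemB (i+1) hi1⟩
          · rcases Sym2.mem_iff.mp hv with rfl | rfl
            · exact ⟨e (i+1), Set.mem_insert_of_mem _ rfl, hmemA (i+1) hi1⟩
            · exact ⟨e i, Set.mem_insert _ _, hmemB i hi⟩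
        · rintro ⟨ed, hed, hv⟩
          simp only [Set.mem_insert_iff, Set.mem_singleton_iff] at hed
          rcases hed with rfl | rfl
          · rcases hmemiff i hi v hv with rfl | rfl
            · exact ⟨_, Set.mem_insert _ _, Sym2.mem_mk_left _ _⟩
            · exact ⟨_, Set.mem_insert_of_mem _ rfl, Sym2.mem_mk_right _ _⟩
          · rcases hmemiff (i+1) hi1 v hv with rfl | rfl
            · exact ⟨_, Set.mem_insert_of_mem _ rfl, Sym2.mem_mk_left _ _⟩
            · exact ⟨_, Set.mem_insert _ _, Sym2.mem_mk_right _ _⟩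
      have hNP := hpu _ hNmatch hNverts
      have hmemN : s(eL (e i), eR (e (i+1))) ∈
          ({s(eL (e i), eR (e (i+1))), s(eL (e (i+1)), eR (e i))} : Set (Sym2 V)) :=
        Set.mem_insert _ _
      rw [hNP] at hmemN
      simp only [Set.mem_insert_iff, Set.mem_singleton_iff] at hmemN
      rcases hmemN with h | h
      · have hm2 : eR (e (i+1)) ∈ s(eL (e i), eR (e (i+1))) := Sym2.mem_mk_right _ _
        rw [h] at hm2
        rcases hmemiff i hi _ hm2 with h4 | h4
        · exact hABne i (i+1) hi hi1 h4.symm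
        · exact hBB (i+1) i hi1 hi (Ne.symm hii1) h4
      · have hm2 : eL (e i) ∈ s(eL (e i), eR (e (i+1))) := Sym2.mem_mk_left _ _
        rw [h] at hm2
        rcases hmemiff (i+1) hi1 _ hm2 with h4 | h4
        · exact hAA i (i+1) hi hi1 hii1 h4
        · exact hABne i (i+1) hi hi1 h4
    have NoBad : ∀ d i j, j - i = d → i < j → j < t →
        ¬(G.Adj (eL (e i)) (eR (e j)) ∧ G.Adj (eL (e j)) (eR (e i))) := by
      intro d
      induction d with
      | zero => intro i j h hij hjt; exact absurd hij (by omega)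
      | succ n ih =>
        intro i j hd hij hjt hbad
        by_cases hj1 : j = i + 1
        · subst hj1; exact hnbad1 i hjt hbad
        · have hi1j : i + 1 < j := by omega
          have hi1t : i + 1 < t := by omega
          have hit : i < t := by omega
          obtain ⟨c1, c2⟩ := hbad
          rcases claimC htf hord (hAB i hit) (hAB (i+1) hi1t) (hAB j hjt)
            (hmono i (i+1) (Nat.lt_succ_self i) hi1t) (hmono (i+1) j hi1j hjt)
            (hAdj i hit) (hAdj (i+1) hi1t) (hAdj j hjt) c1 c2
            (hBB (i+1) i hi1t hit (by omega)) (hBB j (i+1) hjt hi1t (by omega)) with h | h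
          · exact hnbad1 i hi1t h
          · exact ih (i+1) j (by omega) hi1j hjt h
    have hclass : ∀ (N : Set (Sym2 V)), IsMatchingSet G N →
        matchedVerts N = matchedVerts (e '' {i | i < t}) →
        ∀ h, h ∈ N → ∃ i j, i < t ∧ j < t ∧ h = s(eL (e i), eR (e j)) ∧
          eL (e i) < eR (e j) ∧ eL h = eL (e i) := by
      intro N hN hNv h hh
      obtain ⟨hlt, hadj, heq⟩ := edge_repr (hN.1 hh)
      have hLh : eL h ∈ h := by
        have h2 := Sym2.mem_mk_left (eL h) (eR h); rwa [← heq] at h2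
      have hRh : eR h ∈ h := by
        have h2 := Sym2.mem_mk_right (eL h) (eR h); rwa [← heq] at h2
      have hxm : eL h ∈ matchedVerts (e '' {i | i < t}) := by
        rw [← hNv]; exact ⟨h, hh, hLh⟩
      obtain ⟨ed, ⟨i, hi, rfl⟩, hxi⟩ := hxm
      have hi : i < t := hi
      have hx : eL h = eL (e i) := by
        rcases hmemiff i hi _ hxi with h2 | h2
        · exact h2
        · exfalso
          apply noTwoSided htf hord (show eL (e i) < eL h by rw [h2]; exact hAB i hi) hlt
            (show G.Adj (eL (e i)) (eL h) by rw [h2]; exact hAdj i hi) hadj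
      have hym : eR h ∈ matchedVerts (e '' {i | i < t}) := by
        rw [← hNv]; exact ⟨h, hh, hRh⟩
      obtain ⟨ed, ⟨j, hj, rfl⟩, hyj⟩ := hym
      have hj : j < t := hj
      have hy : eR h = eR (e j) := by
        rcases hmemiff j hj _ hyj with h2 | h2
        · exfalso
          apply noTwoSided htf hord hlt (show eR h < eR (e j) by rw [h2]; exact hAB j hj)
            hadj (show G.Adj (eR h) (eR (e j)) by rw [h2]; exact hAdj j hj)
        · exact h2
      exact ⟨i, j, hi, hj, by rw [heq, hx, hy], by rw [← hx, ← hy]; exact hlt, hx⟩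
    have hempty : ∀ (N : Set (Sym2 V)), IsMatchingSet G N →
        matchedVerts N = matchedVerts (e '' {i | i < t}) →
        N \ (e '' {i | i < t}) = ∅ → N = e '' {i | i < t} := by
      intro N hN hNv hd
      have hsub : N ⊆ e '' {i | i < t} := by
        intro x hx
        by_contra hxm
        exact (Set.eq_empty_iff_forall_notMem.1 hd x) ⟨hx, hxm⟩
      refine Set.Subset.antisymm hsub ?_
      rintro x ⟨i, hi, rfl⟩
      have hi : i < t := hi
      have hvv : eL (e i) ∈ matchedVerts N := by
        rw [hNv]; exact ⟨e i, hmem i hi, hmemA i hi⟩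
      obtain ⟨y, hyN, hvy⟩ := hvv
      have h5 := humatch _ hM y (hsub hyN) (e i) (hmem i hi) _ hvy (hmemA i hi)
      rw [← h5]; exact hyN
    have main : ∀ n (N : Set (Sym2 V)), IsMatchingSet G N →
        matchedVerts N = matchedVerts (e '' {i | i < t}) →
        (N \ (e '' {i | i < t})).ncard ≤ n → N = e '' {i | i < t} := by
      intro n
      induction n with
      | zero =>
        intro N h1 h2 h3
        exact hempty N h1 h2 ((Set.ncard_eq_zero (Set.toFinite _)).mp (Nat.le_zero.mp h3))
      | succ n ih =>
        intro N h1 h2 h3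
        by_cases hd : N \ (e '' {i | i < t}) = ∅
        · exact hempty N h1 h2 hd
        · obtain ⟨f, hfmem, hfmin⟩ :=
            Set.exists_min_image _ eL (Set.toFinite _) (Set.nonempty_iff_ne_empty.2 hd)
          obtain ⟨hfN, hfM⟩ := hfmem
          obtain ⟨i, j, hi, hj, hfeq, hfij, hfL⟩ := hclass N h1 h2 f hfN
          have hij : i ≠ j := by
            rintro rfl
            exact hfM (by rw [hfeq, ← hEq _ hi]; exact hmem _ hi)
          have hbiN : eR (e i) ∈ matchedVerts N := by
            rw [h2]; exact ⟨e i, hmem i hi, hmemB i hi⟩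
          obtain ⟨g, hgN, hbig⟩ := hbiN
          obtain ⟨k, m, hk, hm2, hgeq, hgkm, hgL⟩ := hclass N h1 h2 g hgN
          have hmi : m = i := by
            have hbik : eR (e i) = eL (e k) ∨ eR (e i) = eR (e m) := by
              rw [hgeq] at hbig; exact Sym2.mem_iff.mp hbig
            rcases hbik with h4 | h4
            · exact absurd h4.symm (hABne k i hk hi)
            · by_contra hc
              exact (hBB i m hi hm2 (fun hh => hc hh.symm)) h4
          rw [hmi] at hgeq hgkm
          have hfAi : eL (e i) ∈ f := by
            have h5 := Sym2.mem_mk_left (eL (e i)) (eR (e j)); rwa [← hfeq] at h5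
          have hfBj : eR (e j) ∈ f := by
            have h5 := Sym2.mem_mk_right (eL (e i)) (eR (e j)); rwa [← hfeq] at h5
          have hgAk : eL (e k) ∈ g := by
            have h5 := Sym2.mem_mk_left (eL (e k)) (eR (e i)); rwa [← hgeq] at h5
          have hgM : g ∉ e '' {i | i < t} := by
            intro hgMem
            have hgei : g = e i := humatch _ hM g hgMem (e i) (hmem i hi) _ hbig (hmemB i hi)
            have hfei : f = e i :=
              humatch N h1 f hfN (e i) (by rw [← hgei]; exact hgN) _ hfAi (hmemA i hi)
            exact hfM (by rw [hfei]; exact hmem i hi)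
          have hki : k ≠ i := by
            rintro rfl
            exact hgM (by rw [hgeq, ← hEq _ hk]; exact hmem _ hk)
          have hler : eL f ≤ eL g := hfmin g ⟨hgN, hgM⟩
          rw [hfL, hgL] at hler
          have hAik : eL (e i) < eL (e k) :=
            lt_of_le_of_ne hler (hAA i k hi hk (fun hh => hki hh.symm))
          have hik : i < k := hidx i k hi hk hAik
          have hAjN : eL (e j) ∈ matchedVerts N := by
            rw [h2]; exact ⟨e j, hmem j hj, hmemA j hj⟩
          obtain ⟨h', hh'N, hAjh⟩ := hAjN
          obtain ⟨p, q, hp, hq, hheq, hpq, hhL⟩ := hclass N h1 h2 h' hh'N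
          have hpj : p = j := by
            have hAjpq : eL (e j) = eL (e p) ∨ eL (e j) = eR (e q) := by
              rw [hheq] at hAjh; exact Sym2.mem_iff.mp hAjh
            rcases hAjpq with h4 | h4
            · by_contra hc
              exact (hAA j p hj hp (fun hh => hc hh.symm)) h4
            · exact absurd h4 (hABne j q hj hq)
          rw [hpj] at hheq hhL
          have hh'M : h' ∉ e '' {i | i < t} := by
            intro hmem'
            have h5 : h' = e j := humatch _ hM h' hmem' (e j) (hmem j hj) _ hAjh (hmemA j hj)
            have h7 : f = e j :=
              humatch N h1 f hfN (e j) (by rw [← h5]; exact hh'N) _ hfBj (hmemB j hj)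
            exact hfM (by rw [h7]; exact hmem j hj)
          have hler2 : eL f ≤ eL h' := hfmin h' ⟨hh'N, hh'M⟩
          rw [hfL, hhL] at hler2
          have hAij : eL (e i) < eL (e j) := lt_of_le_of_ne hler2 (hAA i j hi hj hij)
          have hijlt : i < j := hidx i j hi hj hAij
          have hfadj : G.Adj (eL (e i)) (eR (e j)) := by
            have h5 := h1.1 hfN; rw [hfeq, SimpleGraph.mem_edgeSet] at h5; exact h5
          have hgadj : G.Adj (eL (e k)) (eR (e i)) := by
            have h5 := h1.1 hgN; rw [hgeq, SimpleGraph.mem_edgeSet] at h5; exact h5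
          by_cases hjk : j = k
          · rw [← hjk] at hgadj
            exact absurd ⟨hfadj, hgadj⟩ (NoBad (j - i) i j rfl hijlt hj)
          · rcases lemG1 htf hord (hAB i hi) (hAB j hj) (hAB k hk) hAij hAik
              (hAdj i hi) (hAdj j hj) (hAdj k hk) hfadj hgadj
              (hBB k i hk hi hki) (hBB j i hj hi (Ne.symm hij)) with hc1 | hc2 | hc3
            · exact absurd ⟨hc1, hgadj⟩ (NoBad (k - i) i k rfl hik hk)
            · exact absurd ⟨hfadj, hc2⟩ (NoBad (j - i) i j rfl hijlt hj)
            · -- reroute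
              have hne'M : s(eL (e k), eR (e j)) ∉ e '' {i | i < t} := by
                rintro ⟨m', hm', hem'⟩
                have hm' : m' < t := hm'
                have hAkm : eL (e k) ∈ e m' := by rw [hem']; exact Sym2.mem_mk_left _ _
                have hBjm : eR (e j) ∈ e m' := by rw [hem']; exact Sym2.mem_mk_right _ _
                rcases hmemiff m' hm' _ hAkm with h4 | h4
                · have hkm : k = m' := by
                    by_contra hc; exact hAA k m' hk hm' hc h4
                  rcases hmemiff m' hm' _ hBjm with h5 | h5
                  · exact hABne m' j hm' hj h5.symm
                  · have hjm : j = m' := by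
                      by_contra hc; exact hBB j m' hj hm' hc h5
                    exact hjk (hjm.trans hkm.symm)
                · exact (hABne k m' hk hm') h4
              have hfg : f ≠ g := by
                intro hh
                rw [← hh] at hbig
                have h4 : eR (e i) = eL (e i) ∨ eR (e i) = eR (e j) := by
                  rw [hfeq] at hbig; exact Sym2.mem_iff.mp hbig
                rcases h4 with h4 | h4
                · exact (hAB i hi).ne' h4
                · exact hBB i j hi hj hij h4
              have hN2match : IsMatchingSet G
                  ((N \ {f, g}) ∪ {e i, s(eL (e k), eR (e j))}) := by
                constructor
                · intro x hx
                  rcases hx with hx | hx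
                  · exact h1.1 hx.1
                  · simp only [Set.mem_insert_iff, Set.mem_singleton_iff] at hx
                    rcases hx with rfl | rfl
                    · exact hM.1 (hmem i hi)
                    · exact G.mem_edgeSet.mpr hc3
                · intro x hx y hy hxy v hvx hvy
                  have key1 : ∀ z, z ∈ N \ ({f, g} : Set (Sym2 V)) → ∀ w, w ∈ z →
                      w ∈ e i → False := by
                    intro z hz w hwz hwei
                    rcases hmemiff i hi w hwei with rfl | rfl
                    · exact hz.2 (by rw [humatch N h1 z hz.1 f hfN _ hwz hfAi]; exact Set.mem_insert _ _)
                    · exact hz.2 (by rw [humatch N h1 z hz.1 g hgN _ hwz hbig]; exact Set.mem_insert_of_mem _ rfl)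
                  have key2 : ∀ z, z ∈ N \ ({f, g} : Set (Sym2 V)) → ∀ w, w ∈ z →
                      w ∈ s(eL (e k), eR (e j)) → False := by
                    intro z hz w hwz hwne
                    rcases Sym2.mem_iff.mp hwne with rfl | rfl
                    · exact hz.2 (by rw [humatch N h1 z hz.1 g hgN _ hwz hgAk]; exact Set.mem_insert_of_mem _ rfl)
                    · exact hz.2 (by rw [humatch N h1 z hz.1 f hfN _ hwz hfBj]; exact Set.mem_insert _ _)
                  have key3 : ∀ w, w ∈ e i → w ∈ s(eL (e k), eR (e j)) → False := by
                    intro w hw1 hw2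
                    rcases hmemiff i hi w hw1 with rfl | rfl <;>
                      rcases Sym2.mem_iff.mp hw2 with h4 | h4
                    · exact hAA i k hi hk (fun hh => hki hh.symm) h4
                    · exact hABne i j hi hj h4
                    · exact (hABne k i hk hi) h4.symm
                    · exact hBB i j hi hj hij h4
                  rcases hx with hx | hx
                  · rcases hy with hy | hy
                    · exact h1.2 x hx.1 y hy.1 hxy v hvx hvy
                    · simp only [Set.mem_insert_iff, Set.mem_singleton_iff] at hy
                      rcases hy with rfl | rfl
                      · exact key1 x hx v hvx hvy
                      · exact key2 x hx v hvx hvy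
                  · simp only [Set.mem_insert_iff, Set.mem_singleton_iff] at hx
                    rcases hy with hy | hy
                    · rcases hx with rfl | rfl
                      · exact key1 y hy v hvy hvx
                      · exact key2 y hy v hvy hvx
                    · simp only [Set.mem_insert_iff, Set.mem_singleton_iff] at hy
                      rcases hx with rfl | rfl <;> rcases hy with rfl | rfl
                      · exact hxy rfl
                      · exact key3 v hvx hvy
                      · exact key3 v hvy hvx
                      · exact hxy rfl
              have hN2verts : matchedVerts ((N \ {f, g}) ∪ {e i, s(eL (e k), eR (e j))}) =
                  matchedVerts (e '' {i | i < t}) := by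
                apply Set.Subset.antisymm
                · rintro v ⟨x, hx, hvx⟩
                  rcases hx with hx | hx
                  · rw [← h2]; exact ⟨x, hx.1, hvx⟩
                  · simp only [Set.mem_insert_iff, Set.mem_singleton_iff] at hx
                    rcases hx with rfl | rfl
                    · exact ⟨e i, hmem i hi, hvx⟩
                    · rcases Sym2.mem_iff.mp hvx with rfl | rfl
                      · exact ⟨e k, hmem k hk, hmemA k hk⟩
                      · exact ⟨e j, hmem j hj, hmemB j hj⟩
                · intro v hv
                  rw [← h2] at hv
                  obtain ⟨x, hxN, hvx⟩ := hv
                  by_cases hxfg : x ∈ ({f, g} : Set (Sym2 V))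
                  · simp only [Set.mem_insert_iff, Set.mem_singleton_iff] at hxfg
                    rcases hxfg with rfl | rfl
                    · have h4 : v = eL (e i) ∨ v = eR (e j) := by
                        rw [hfeq] at hvx; exact Sym2.mem_iff.mp hvx
                      rcases h4 with rfl | rfl
                      · exact ⟨e i, Set.mem_union_right _ (Set.mem_insert _ _), hmemA i hi⟩
                      · exact ⟨s(eL (e k), eR (e j)),
                          Set.mem_union_right _ (Set.mem_insert_of_mem _ rfl),
                          Sym2.mem_mk_right _ _⟩
                    · have h4 : v = eL (e k) ∨ v = eR (e i) := by
                        rw [hgeq] at hvx; exact Sym2.mem_iff.mp hvx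
                      rcases h4 with rfl | rfl
                      · exact ⟨s(eL (e k), eR (e j)),
                          Set.mem_union_right _ (Set.mem_insert_of_mem _ rfl),
                          Sym2.mem_mk_left _ _⟩
                      · exact ⟨e i, Set.mem_union_right _ (Set.mem_insert _ _), hmemB i hi⟩
                  · exact ⟨x, Set.mem_union_left _ ⟨hxN, hxfg⟩, hvx⟩
              have hfgsub : ({f, g} : Set (Sym2 V)) ⊆ N \ (e '' {i | i < t}) := by
                intro z hz
                simp only [Set.mem_insert_iff, Set.mem_singleton_iff] at hz
                rcases hz with rfl | rfl
                · exact ⟨hfN, hfM⟩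
                · exact ⟨hgN, hgM⟩
              have hsub2 : ((N \ {f, g}) ∪ {e i, s(eL (e k), eR (e j))}) \ (e '' {i | i < t}) ⊆
                  insert (s(eL (e k), eR (e j))) ((N \ (e '' {i | i < t})) \ {f, g}) := by
                rintro x ⟨hx, hxM⟩
                rcases hx with hx | hx
                · exact Set.mem_insert_of_mem _ ⟨⟨hx.1, hxM⟩, hx.2⟩
                · simp only [Set.mem_insert_iff, Set.mem_singleton_iff] at hx
                  rcases hx with rfl | rfl
                  · exact absurd (hmem i hi) hxM
                  · exact Set.mem_insert _ _
              have hcard1 : ((N \ (e '' {i | i < t})) \ ({f, g} : Set (Sym2 V))).ncard =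
                  (N \ (e '' {i | i < t})).ncard - 2 := by
                rw [Set.ncard_diff hfgsub (Set.toFinite _), Set.ncard_pair hfg]
              have hcard2 : 2 ≤ (N \ (e '' {i | i < t})).ncard := by
                have h4 := Set.ncard_le_ncard hfgsub (Set.toFinite _)
                rwa [Set.ncard_pair hfg] at h4
              have hcard3 : (((N \ {f, g}) ∪ {e i, s(eL (e k), eR (e j))}) \
                  (e '' {i | i < t})).ncard ≤ n := by
                have h4 := Set.ncard_le_ncard hsub2 (Set.toFinite _)
                have h5 := Set.ncard_insert_le (s(eL (e k), eR (e j)))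
                  ((N \ (e '' {i | i < t})) \ ({f, g} : Set (Sym2 V)))
                omega
              have hN2M := ih _ hN2match hN2verts hcard3
              have h6 : s(eL (e k), eR (e j)) ∈ e '' {i | i < t} := by
                rw [← hN2M]
                exact Set.mem_union_right _ (Set.mem_insert_of_mem _ rfl)
              exact absurd h6 hne'M
    exact main ((M' \ (e '' {i | i < t})).ncard) M' hm' hv' le_rfl
end

section
/- Let G be a triangle-free finite simple graph with a transitive vertex ordering <, let M be a uniquely restricted matching in G starting with an edge e' ∈ E(G), and let e ∈ E(G) be an edge such that l(e) < l(e') and {e, e'} is a uniquely restricted matching in G. Then {e} ∪ M is a uniquely restricted matching in G starting with e. -/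
section Aux
set_option linter.unusedSectionVars false

variable {V : Type*} [LinearOrder V] {G : SimpleGraph V}

lemma eL_mk (a b : V) : eL s(a, b) = min a b := rfl

lemma eR_mk (a b : V) : eR s(a, b) = max a b := rfl

lemma sym2_eq (z : Sym2 V) : z = s(eL z, eR z) := by
  induction z using Sym2.ind with
  | _ a b =>
    rw [eL_mk, eR_mk]
    rcases le_total a b with h | h
    · rw [min_eq_left h, max_eq_right h]
    · rw [min_eq_right h, max_eq_left h]; exact Sym2.eq_swap

lemma eL_le_eR (z : Sym2 V) : eL z ≤ eR z := by
  induction z using Sym2.ind with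
  | _ a b => rw [eL_mk, eR_mk]; exact min_le_max

lemma edge_decomp {z : Sym2 V} (hz : z ∈ G.edgeSet) :
    ∃ x y, z = s(x, y) ∧ x < y ∧ G.Adj x y ∧ eL z = x ∧ eR z = y := by
  have hAd : G.Adj (eL z) (eR z) := G.mem_edgeSet.mp (by rw [← sym2_eq z]; exact hz)
  exact ⟨eL z, eR z, sym2_eq z, lt_of_le_of_ne (eL_le_eR z) (G.ne_of_adj hAd), hAd, rfl, rfl⟩

lemma matching_mono {N N' : Set (Sym2 V)} (h : N' ⊆ N) (hN : IsMatchingSet G N) :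
    IsMatchingSet G N' :=
  ⟨h.trans hN.1, fun e he f hf => hN.2 e (h he) f (h hf)⟩

lemma noC4_mono {N N' : Set (Sym2 V)} (h : N' ⊆ N) (hN : ¬ HasAltC4 G N) :
    ¬ HasAltC4 G N' := by
  rintro ⟨u, v, u', v', h1, h2, h3, h4, h5, h6, m1, m2, a1, a2⟩
  exact hN ⟨u, v, u', v', h1, h2, h3, h4, h5, h6, h m1, h m2, a1, a2⟩

lemma partner_unique {N : Set (Sym2 V)} (hN : IsMatchingSet G N) {v w w' : V}
    (h : s(v, w) ∈ N) (h' : s(v, w') ∈ N) : w = w' := by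
  by_cases heq : s(v, w) = s(v, w')
  · rcases Sym2.eq_iff.mp heq with ⟨-, h⟩ | ⟨h1, h2⟩
    · exact h
    · rw [h2, h1]
  · exact absurd (Sym2.mem_mk_left v w') (hN.2 _ h _ h' heq v (Sym2.mem_mk_left v w))

lemma mem_matchedVerts_left {N : Set (Sym2 V)} {x y : V} (h : s(x, y) ∈ N) :
    x ∈ matchedVerts N := ⟨_, h, Sym2.mem_mk_left x y⟩

lemma mem_matchedVerts_right {N : Set (Sym2 V)} {x y : V} (h : s(x, y) ∈ N) :
    y ∈ matchedVerts N := ⟨_, h, Sym2.mem_mk_right x y⟩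

lemma exists_partner {N : Set (Sym2 V)} (hN : IsMatchingSet G N) {v : V}
    (hv : v ∈ matchedVerts N) : ∃ w, s(v, w) ∈ N ∧ G.Adj v w := by
  obtain ⟨g, hg, hvg⟩ := hv
  obtain ⟨w, rfl⟩ := Sym2.mem_iff_exists.mp hvg
  exact ⟨w, hg, G.mem_edgeSet.mp (hN.1 hg)⟩

lemma matchedVerts_diff {N : Set (Sym2 V)} (hN : IsMatchingSet G N) {x y : V}
    (h : s(x, y) ∈ N) :
    matchedVerts (N \ {s(x, y)}) = matchedVerts N \ {x, y} := by
  ext v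
  constructor
  · rintro ⟨g, hg, hvg⟩
    refine ⟨⟨g, hg.1, hvg⟩, ?_⟩
    have hvnot : v ∉ s(x, y) := hN.2 g hg.1 _ h hg.2 v hvg
    intro hv
    apply hvnot
    rcases hv with rfl | hv
    · exact Sym2.mem_mk_left _ _
    · rw [Set.mem_singleton_iff] at hv; subst hv; exact Sym2.mem_mk_right _ _
  · rintro ⟨⟨g, hg, hvg⟩, hv⟩
    refine ⟨g, ⟨hg, ?_⟩, hvg⟩
    intro hmem
    rw [Set.mem_singleton_iff] at hmem
    subst hmem
    rcases Sym2.mem_iff.mp hvg with rfl | rfl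
    · exact hv (Set.mem_insert _ _)
    · exact hv (Set.mem_insert_of_mem _ rfl)

lemma eL_mem (z : Sym2 V) : eL z ∈ z := by
  induction z using Sym2.ind with
  | _ a b =>
    rw [eL_mk]
    rcases le_total a b with h | h
    · rw [min_eq_left h]; exact Sym2.mem_mk_left _ _
    · rw [min_eq_right h]; exact Sym2.mem_mk_right _ _

lemma eq_empty_of_matchedVerts {N : Set (Sym2 V)} (h : matchedVerts N = ∅) : N = ∅ := by
  ext g
  simp only [Set.mem_empty_iff_false, iff_false]
  intro hg
  have hmem : eL g ∈ matchedVerts N := ⟨g, hg, eL_mem g⟩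
  rw [h] at hmem
  exact hmem

lemma no_path (htf : G.CliqueFree 3) (hord : IsTransitiveOrdering G) :
    ∀ u v w : V, u < v → v < w → G.Adj u v → G.Adj v w → False := by
  intro u v w h1 h2 ha hb
  have hc := (hord u v w h1 h2).1 ha hb
  exact htf {u, v, w} (SimpleGraph.is3Clique_triple_iff.mpr ⟨ha, hc, hb⟩)

end Aux
section Aux2
set_option linter.unusedSectionVars false

variable {V : Type*} [LinearOrder V] {G : SimpleGraph V}

lemma not_hasAltC4_of_UR {N : Set (Sym2 V)} (hur : UniquelyRestricted G N) :
    ¬ HasAltC4 G N := by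
  rintro ⟨u, v, u', v', huv, huu', huv', hvu', hvv', hu'v', he1, he2, ha1, ha2⟩
  have hN := hur.1
  have hne12 : s(u, v) ≠ s(u', v') := by
    intro h
    rcases Sym2.eq_iff.mp h with ⟨h1, -⟩ | ⟨h1, -⟩
    · exact huu' h1
    · exact huv' h1
  set N'' : Set (Sym2 V) := (N \ {s(u, v), s(u', v')}) ∪ {s(u, u'), s(v, v')} with hN''def
  have m1 : s(u, u') ∈ N'' := Set.mem_union_right _ (Set.mem_insert _ _)
  have m2 : s(v, v') ∈ N'' := Set.mem_union_right _ (Set.mem_insert_of_mem _ rfl)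
  have hmemnew : ∀ g ∈ N, g ≠ s(u, v) → g ≠ s(u', v') → ∀ x, x ∈ g →
      x ∉ s(u, u') ∧ x ∉ s(v, v') := by
    intro g hg h1 h2 x hx
    have k1 := hN.2 g hg _ he1 h1 x hx
    have k2 := hN.2 g hg _ he2 h2 x hx
    constructor
    · intro hx'
      rcases Sym2.mem_iff.mp hx' with rfl | rfl
      · exact k1 (Sym2.mem_mk_left _ _)
      · exact k2 (Sym2.mem_mk_left _ _)
    · intro hx'
      rcases Sym2.mem_iff.mp hx' with rfl | rfl
      · exact k1 (Sym2.mem_mk_right _ _)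
      · exact k2 (Sym2.mem_mk_right _ _)
  have hmatch : IsMatchingSet G N'' := by
    constructor
    · rintro g (⟨hg, -⟩ | hg)
      · exact hN.1 hg
      · rcases hg with rfl | hg
        · exact G.mem_edgeSet.mpr ha1
        · rw [Set.mem_singleton_iff] at hg; subst hg; exact G.mem_edgeSet.mpr ha2
    · rintro f hf g hg hfg x hxf hxg
      rcases hf with ⟨hfN, hf1⟩ | hf
      · rcases hg with ⟨hgN, hg1⟩ | hg
        · exact hN.2 f hfN g hgN hfg x hxf hxg
        · simp only [Set.mem_insert_iff, not_or, Set.mem_singleton_iff] at hf1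
          have := hmemnew f hfN hf1.1 hf1.2 x hxf
          rcases hg with rfl | hg
          · exact this.1 hxg
          · rw [Set.mem_singleton_iff] at hg; subst hg; exact this.2 hxg
      · rcases hg with ⟨hgN, hg1⟩ | hg
        · simp only [Set.mem_insert_iff, not_or, Set.mem_singleton_iff] at hg1
          have := hmemnew g hgN hg1.1 hg1.2 x hxg
          rcases hf with rfl | hf
          · exact this.1 hxf
          · rw [Set.mem_singleton_iff] at hf; subst hf; exact this.2 hxf
        · rcases hf with rfl | hf
          · rcases hg with rfl | hg
            · exact hfg rfl
            · rw [Set.mem_singleton_iff] at hg; subst hg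
              rcases Sym2.mem_iff.mp hxf with rfl | rfl
              · rcases Sym2.mem_iff.mp hxg with h | h
                · exact huv h
                · exact huv' h
              · rcases Sym2.mem_iff.mp hxg with h | h
                · exact hvu' h.symm
                · exact hu'v' h
          · rw [Set.mem_singleton_iff] at hf; subst hf
            rcases hg with rfl | hg
            · rcases Sym2.mem_iff.mp hxf with rfl | rfl
              · rcases Sym2.mem_iff.mp hxg with h | h
                · exact huv h.symm
                · exact hvu' h
              · rcases Sym2.mem_iff.mp hxg with h | h
                · exact huv' h.symm
                · exact hu'v' h.symm
            · rw [Set.mem_singleton_iff] at hg; subst hg; exact hfg rfl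
  have hmv : matchedVerts N'' = matchedVerts N := by
    ext x
    constructor
    · rintro ⟨g, hg, hxg⟩
      rcases hg with ⟨hgN, -⟩ | hg
      · exact ⟨g, hgN, hxg⟩
      · rcases hg with rfl | hg
        · rcases Sym2.mem_iff.mp hxg with rfl | rfl
          · exact mem_matchedVerts_left he1
          · exact mem_matchedVerts_left he2
        · rw [Set.mem_singleton_iff] at hg; subst hg
          rcases Sym2.mem_iff.mp hxg with rfl | rfl
          · exact mem_matchedVerts_right he1
          · exact mem_matchedVerts_right he2
    · rintro ⟨g, hg, hxg⟩
      by_cases h1 : g = s(u, v)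
      · subst h1
        rcases Sym2.mem_iff.mp hxg with rfl | rfl
        · exact ⟨_, m1, Sym2.mem_mk_left _ _⟩
        · exact ⟨_, m2, Sym2.mem_mk_left _ _⟩
      · by_cases h2 : g = s(u', v')
        · subst h2
          rcases Sym2.mem_iff.mp hxg with rfl | rfl
          · exact ⟨_, m1, Sym2.mem_mk_right _ _⟩
          · exact ⟨_, m2, Sym2.mem_mk_right _ _⟩
        · refine ⟨g, Set.mem_union_left _ ⟨hg, ?_⟩, hxg⟩
          simp only [Set.mem_insert_iff, not_or, Set.mem_singleton_iff]
          exact ⟨h1, h2⟩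
  have hne'' : N'' ≠ N := by
    intro h
    have hmem : s(u, u') ∈ N := h ▸ m1
    have hd : s(u, u') ≠ s(u, v) := by
      intro hh
      rcases Sym2.eq_iff.mp hh with ⟨-, h2⟩ | ⟨h1, -⟩
      · exact hvu' h2.symm
      · exact huv h1
    exact hN.2 _ hmem _ he1 hd u (Sym2.mem_mk_left _ _) (Sym2.mem_mk_left _ _)
  exact hne'' (hur.2 N'' hmatch hmv)

end Aux2
section Aux3
set_option linter.unusedSectionVars false

variable {V : Type*} [Fintype V] [LinearOrder V] {G : SimpleGraph V}

lemma core_UR (htf : G.CliqueFree 3) (hord : IsTransitiveOrdering G) :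
    ∀ n : ℕ, ∀ N N' : Set (Sym2 V), IsMatchingSet G N → ¬ HasAltC4 G N →
      IsMatchingSet G N' → matchedVerts N' = matchedVerts N →
      (matchedVerts N).ncard ≤ n → N' = N := by
  intro n
  induction n with
  | zero =>
    intro N N' hN _ hN' hmv hcard
    have hX : matchedVerts N = ∅ :=
      (Set.ncard_eq_zero (Set.toFinite _)).mp (Nat.le_zero.mp hcard)
    rw [eq_empty_of_matchedVerts (hmv.trans hX), eq_empty_of_matchedVerts hX]
  | succ n ih =>
    intro N N' hN hC4 hN' hmv hcard
    rcases Set.eq_empty_or_nonempty (matchedVerts N) with hX | hXne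
    · rw [eq_empty_of_matchedVerts (hmv.trans hX), eq_empty_of_matchedVerts hX]
    obtain ⟨a, haX, hamin⟩ := Set.exists_min_image (matchedVerts N) id (Set.toFinite _) hXne
    have hL1 := no_path htf hord
    have hL2 : ∀ u v w : V, u < v → v < w → G.Adj u w → G.Adj u v ∨ G.Adj v w :=
      fun u v w h1 h2 h => (hord u v w h1 h2).2 h
    obtain ⟨b, hab, hAab⟩ := exists_partner hN haX
    have haX' : a ∈ matchedVerts N' := by rw [hmv]; exact haX
    obtain ⟨b', hab', hAab'⟩ := exists_partner hN' haX'
    have hbX : b ∈ matchedVerts N := mem_matchedVerts_right hab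
    have hb'X : b' ∈ matchedVerts N := by rw [← hmv]; exact mem_matchedVerts_right hab'
    have hlt_b : a < b := lt_of_le_of_ne (hamin b hbX) (G.ne_of_adj hAab)
    have hlt_b' : a < b' := lt_of_le_of_ne (hamin b' hb'X) (G.ne_of_adj hAab')
    have swapN : ∀ {x y : V}, s(x, y) ∈ N → s(y, x) ∈ N := by
      intro x y h; rw [Sym2.eq_swap]; exact h
    have swapN' : ∀ {x y : V}, s(x, y) ∈ N' → s(y, x) ∈ N' := by
      intro x y h; rw [Sym2.eq_swap]; exact h
    by_cases hbb' : b = b'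
    · subst hbb'
      have hd : matchedVerts (N \ {s(a, b)}) = matchedVerts N \ {a, b} :=
        matchedVerts_diff hN hab
      have hd' : matchedVerts (N' \ {s(a, b)}) = matchedVerts N' \ {a, b} :=
        matchedVerts_diff hN' hab'
      have key : matchedVerts (N' \ {s(a, b)}) = matchedVerts (N \ {s(a, b)}) := by
        rw [hd, hd', hmv]
      have hlt : (matchedVerts (N \ {s(a, b)})).ncard < (matchedVerts N).ncard := by
        rw [hd]
        refine Set.ncard_lt_ncard ?_ (Set.toFinite _)
        refine Set.ssubset_iff_subset_ne.mpr ⟨Set.diff_subset, fun h => ?_⟩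
        have h2 := haX
        rw [← h] at h2
        exact h2.2 (Set.mem_insert _ _)
      have hrec := ih (N \ {s(a, b)}) (N' \ {s(a, b)})
        (matching_mono Set.diff_subset hN) (noC4_mono Set.diff_subset hC4)
        (matching_mono Set.diff_subset hN') key
        (Nat.lt_succ_iff.mp (lt_of_lt_of_le hlt hcard))
      ext g
      constructor
      · intro hg
        by_cases hge : g = s(a, b)
        · rw [hge]; exact hab
        · have hmem : g ∈ N' \ {s(a, b)} := ⟨hg, hge⟩
          rw [hrec] at hmem; exact hmem.1
      · intro hg
        by_cases hge : g = s(a, b)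
        · rw [hge]; exact hab'
        · have hmem : g ∈ N \ {s(a, b)} := ⟨hg, hge⟩
          rw [← hrec] at hmem; exact hmem.1
    · exfalso
      have mkC4 : ∀ u v u' v' : V, s(u, v) ∈ N → s(u', v') ∈ N → u ≠ v → u ≠ u' → u ≠ v' →
          v ≠ u' → v ≠ v' → u' ≠ v' → G.Adj u u' → G.Adj v v' → False :=
        fun u v u' v' m1 m2 d1 d2 d3 d4 d5 d6 a1 a2 =>
          hC4 ⟨u, v, u', v', d1, d2, d3, d4, d5, d6, m1, m2, a1, a2⟩
      -- step 3 : N-partner c of b'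
      obtain ⟨c, hb'c, hAb'c⟩ := exists_partner hN hb'X
      have hcb'lt : c < b' := by
        have hnot : ¬ b' < c := fun h => hL1 a b' c hlt_b' h hAab' hAb'c
        exact ((G.ne_of_adj hAb'c).lt_or_gt).resolve_left hnot
      have hca : c ≠ a := by
        rintro rfl
        exact hbb' (partner_unique hN hab (swapN hb'c))
      have hac : a < c := lt_of_le_of_ne (hamin c (mem_matchedVerts_right hb'c)) (Ne.symm hca)
      have hcb : c ≠ b := by
        rintro rfl
        have := partner_unique hN (swapN hb'c) (swapN hab)
        exact (ne_of_gt hlt_b') this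
      -- step 4 : b < c
      have hbc : b < c := by
        rcases hcb.lt_or_gt with h | h
        · exfalso
          rcases hL2 a c b hac h hAab with h2 | h2
          · exact hL1 a c b' hac hcb'lt h2 hAb'c.symm
          · exact mkC4 a b b' c hab hb'c (ne_of_lt hlt_b) (ne_of_lt hlt_b') (ne_of_lt hac)
              hbb' (Ne.symm hcb) (G.ne_of_adj hAb'c) hAab' h2.symm
        · exact h
      -- step 5 : N'-partner c₂ of b
      have hbX' : b ∈ matchedVerts N' := by rw [hmv]; exact hbX
      obtain ⟨c₂, hbc₂, hAbc₂⟩ := exists_partner hN' hbX'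
      have hc₂b : c₂ < b := by
        have hnot : ¬ b < c₂ := fun h => hL1 a b c₂ hlt_b h hAab hAbc₂
        exact ((G.ne_of_adj hAbc₂).lt_or_gt).resolve_left hnot
      have hc₂a : c₂ ≠ a := by
        rintro rfl
        exact hbb' (partner_unique hN' (swapN' hbc₂) hab')
      have hc₂X : c₂ ∈ matchedVerts N := by rw [← hmv]; exact mem_matchedVerts_right hbc₂
      have hac₂ : a < c₂ := lt_of_le_of_ne (hamin c₂ hc₂X) (Ne.symm hc₂a)
      -- step 6 : N-partner d₂ of c₂
      obtain ⟨d₂, hc₂d₂, hAc₂d₂⟩ := exists_partner hN hc₂X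
      have hc₂d₂lt : c₂ < d₂ := by
        have hnot : ¬ d₂ < c₂ := fun h => hL1 d₂ c₂ b h hc₂b hAc₂d₂.symm hAbc₂.symm
        exact ((G.ne_of_adj hAc₂d₂).lt_or_gt).resolve_right hnot
      have hd₂b : d₂ ≠ b := by
        rintro rfl
        have := partner_unique hN (swapN hc₂d₂) (swapN hab)
        exact hc₂a this
      have hd₂b' : d₂ ≠ b' := by
        rintro rfl
        have := partner_unique hN (swapN hc₂d₂) hb'c
        exact (ne_of_lt (lt_trans hc₂b hbc)) this
      -- steps 7-8 : b' < d₂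
      have hb'd₂ : b' < d₂ := by
        have hnot : ¬ d₂ < b' := by
          intro h
          rcases hL2 a d₂ b' (lt_trans hac₂ hc₂d₂lt) h hAab' with h2 | h2
          · exact mkC4 a b d₂ c₂ hab (swapN hc₂d₂) (ne_of_lt hlt_b)
              (ne_of_lt (lt_trans hac₂ hc₂d₂lt)) (ne_of_lt hac₂) (Ne.symm hd₂b)
              (G.ne_of_adj hAbc₂) (Ne.symm (G.ne_of_adj hAc₂d₂)) h2 hAbc₂
          · exact hL1 c₂ d₂ b' hc₂d₂lt h hAc₂d₂ h2
        exact (hd₂b'.lt_or_gt).resolve_left hnot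
      -- step 9 : Adj c d₂
      have hcd₂adj : G.Adj c d₂ := by
        rcases hL2 c₂ c d₂ (lt_trans hc₂b hbc) (lt_trans hcb'lt hb'd₂) hAc₂d₂ with h | h
        · exact (hL1 c₂ c b' (lt_trans hc₂b hbc) hcb'lt h hAb'c.symm).elim
        · exact h
      -- step 10 : Adj c₂ b'
      have hc₂b'adj : G.Adj c₂ b' := by
        rcases hL2 a c₂ b' hac₂ (lt_trans hc₂b (lt_trans hbc hcb'lt)) hAab' with h | h
        · exact (hL1 a c₂ b hac₂ hc₂b h hAbc₂.symm).elim
        · exact h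
      -- step 11 : alternating C4 in N
      exact mkC4 c₂ d₂ b' c hc₂d₂ hb'c (ne_of_lt hc₂d₂lt)
        (ne_of_lt (lt_trans hc₂b (lt_trans hbc hcb'lt))) (ne_of_lt (lt_trans hc₂b hbc))
        hd₂b' (ne_of_gt (lt_trans hcb'lt hb'd₂)) (G.ne_of_adj hAb'c) hc₂b'adj hcd₂adj.symm

lemma UR_of_noC4 (htf : G.CliqueFree 3) (hord : IsTransitiveOrdering G)
    {N : Set (Sym2 V)} (hN : IsMatchingSet G N) (hC4 : ¬ HasAltC4 G N) :
    UniquelyRestricted G N :=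
  ⟨hN, fun N' hN' hmv => core_UR htf hord (matchedVerts N).ncard N N' hN hC4 hN' hmv le_rfl⟩

end Aux3
theorem stmt17 {V : Type*} [Fintype V] [LinearOrder V] (G : SimpleGraph V)
    (htf : G.CliqueFree 3) (hord : IsTransitiveOrdering G)
    (M : Set (Sym2 V)) (e e' : Sym2 V)
    (hM : UniquelyRestricted G M) (hstart : StartsWith M e')
    (he : e ∈ G.edgeSet) (hle : eL e < eL e')
    (hee' : UniquelyRestricted G {e, e'}) :
    UniquelyRestricted G ({e} ∪ M) ∧ StartsWith ({e} ∪ M) e := by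
  have hL1 := no_path htf hord
  have hL2 : ∀ u v w : V, u < v → v < w → G.Adj u w → G.Adj u v ∨ G.Adj v w :=
    fun u v w h1 h2 h => (hord u v w h1 h2).2 h
  obtain ⟨a, b, heq, hab, hAab, heLe, -⟩ := edge_decomp he
  have he'E : e' ∈ G.edgeSet := hM.1.1 hstart.1
  obtain ⟨a', b', heq', ha'b', hAa'b', heLe', -⟩ := edge_decomp he'E
  rw [heLe, heLe'] at hle
  have hstart2 : ∀ f ∈ M, f ≠ e' → a' < eL f := by
    intro f hf h
    have := hstart.2 f hf h
    rwa [heLe'] at this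
  have hne : e ≠ e' := by
    intro h
    rw [h, heq'] at heq
    rcases Sym2.eq_iff.mp heq.symm with ⟨h1, -⟩ | ⟨h1, h2⟩
    · rw [h1] at hle; exact lt_irrefl _ hle
    · rw [h1] at hle; exact lt_asymm hle ha'b'
  have hmema : a ∈ e := by rw [heq]; exact Sym2.mem_mk_left _ _
  have hmemb : b ∈ e := by rw [heq]; exact Sym2.mem_mk_right _ _
  have hmema' : a' ∈ e' := by rw [heq']; exact Sym2.mem_mk_left _ _
  have hmemb' : b' ∈ e' := by rw [heq']; exact Sym2.mem_mk_right _ _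
  have hdisj : ∀ v ∈ e, v ∉ e' :=
    hee'.1.2 e (Set.mem_insert _ _) e' (Set.mem_insert_of_mem _ rfl) hne
  have h_ab' : a ≠ b' := fun h => hdisj a hmema (by rw [h]; exact hmemb')
  have h_ba' : b ≠ a' := fun h => hdisj b hmemb (by rw [h]; exact hmema')
  have h_bb' : b ≠ b' := fun h => hdisj b hmemb (by rw [h]; exact hmemb')
  have noC4M := not_hasAltC4_of_UR hM
  have noC4ee' := not_hasAltC4_of_UR hee'
  have hemem : e ∈ ({e, e'} : Set (Sym2 V)) := Set.mem_insert _ _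
  have he'mem : e' ∈ ({e, e'} : Set (Sym2 V)) := Set.mem_insert_of_mem _ rfl
  -- Part 3 : e is disjoint from every edge of M
  have hdisjM : ∀ f ∈ M, ∀ v, v ∈ e → v ∉ f := by
    intro f hf v hve hvf
    by_cases hfe' : f = e'
    · subst hfe'; exact hdisj v hve hvf
    obtain ⟨c, d, hfeq, hcd, hAcd, hfL, -⟩ := edge_decomp (hM.1.1 hf)
    have ha'c : a' < c := by rw [← hfL]; exact hstart2 f hf hfe'
    have hac : a < c := lt_trans hle ha'c
    rw [heq] at hve
    rw [hfeq] at hvf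
    rcases Sym2.mem_iff.mp hve with h | h
    · rcases Sym2.mem_iff.mp hvf with h2 | h2
      · exact (ne_of_lt hac) (h.symm.trans h2)
      · exact (ne_of_lt (lt_trans hac hcd)) (h.symm.trans h2)
    · rcases Sym2.mem_iff.mp hvf with h2 | h2
      · have hbceq : b = c := h.symm.trans h2
        subst hbceq
        exact hL1 a b d hab hcd hAab hAcd
      · have hbdeq : b = d := h.symm.trans h2
        subst hbdeq
        -- f = s(c, b) with a < a' < c < b
        have hdisjf : ∀ x ∈ e', x ∉ f := hM.1.2 e' hstart.1 f hf (Ne.symm hfe')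
        have hb'f := hdisjf b' hmemb'
        rw [hfeq] at hb'f
        have hb'c : b' ≠ c := fun h => hb'f (by rw [h]; exact Sym2.mem_mk_left _ _)
        have hb'b : b' ≠ b := fun h => hb'f (by rw [h]; exact Sym2.mem_mk_right _ _)
        have ha'b : a' < b := lt_trans ha'c hcd
        have hAa'b : G.Adj a' b := by
          rcases hL2 a a' b hle ha'b hAab with h | h
          · exact (hL1 a a' b' hle ha'b' h hAa'b').elim
          · exact h
        rcases hb'b.lt_or_gt with h1 | h1
        · -- b' < b
          have hAab'2 : G.Adj a b' := by
            rcases hL2 a b' b (lt_trans hle ha'b') h1 hAab with h | h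
            · exact h
            · exact (hL1 a' b' b ha'b' h1 hAa'b' h).elim
          exact noC4ee' ⟨a, b, b', a', ne_of_lt hab, h_ab', ne_of_lt hle, Ne.symm hb'b,
            ne_of_gt ha'b, ne_of_gt ha'b',
            (by rw [← heq]; exact hemem),
            (by rw [Sym2.eq_swap, ← heq']; exact he'mem), hAab'2, hAa'b.symm⟩
        · -- b < b'
          have hAcb' : G.Adj c b' := by
            rcases hL2 a' c b' ha'c (lt_trans hcd h1) hAa'b' with h | h
            · exact (hL1 a' c b ha'c hcd h hAcd).elim
            · exact h
          exact noC4M ⟨c, b, b', a', ne_of_lt hcd, ne_of_lt (lt_trans hcd h1),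
            ne_of_gt ha'c, Ne.symm hb'b, ne_of_gt ha'b, ne_of_gt ha'b',
            (by rw [← hfeq]; exact hf),
            (by rw [Sym2.eq_swap, ← heq']; exact hstart.1), hAcb', hAa'b.symm⟩
  -- a < left endpoint of every edge of M
  have haf : ∀ f ∈ M, a < eL f := by
    intro f hf
    by_cases h : f = e'
    · rw [h, heLe']; exact hle
    · exact lt_trans hle (hstart2 f hf h)
  -- Part 4a : no "same-orientation" cross pair
  have hACsame : ∀ f ∈ M, ∀ c d : V, f = s(c, d) → c < d → G.Adj a c → G.Adj b d → False := by
    intro f hf c d hfeq hcd hac hbd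
    have hAcd : G.Adj c d := G.mem_edgeSet.mp (by rw [← hfeq]; exact hM.1.1 hf)
    have haltc : a < c := by
      have h1 := haf f hf
      rwa [hfeq, eL_mk, min_eq_left hcd.le] at h1
    exact hL1 a c d haltc hcd hac hAcd
  -- Part 4b : no "crossed" cross pair
  have hACine : ∀ f ∈ M, ∀ c d : V, f = s(c, d) → c < d → G.Adj a d → G.Adj b c → False := by
    intro f hf c d hfeq hcd had hbc
    have hAcd : G.Adj c d := G.mem_edgeSet.mp (by rw [← hfeq]; exact hM.1.1 hf)
    by_cases hfe' : f = e'
    · have hcdab : s(c, d) = s(a', b') := by rw [← hfeq, hfe', heq']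
      rcases Sym2.eq_iff.mp hcdab.symm with ⟨rfl, rfl⟩ | ⟨rfl, rfl⟩
      · exact noC4ee' ⟨a, b, b', a', ne_of_lt hab, h_ab', ne_of_lt hle, h_bb', h_ba',
          ne_of_gt ha'b', (by rw [← heq]; exact hemem),
          (by rw [Sym2.eq_swap, ← heq']; exact he'mem), had, hbc⟩
      · exact absurd hcd (lt_asymm ha'b')
    · have ha'c : a' < c := by
        have h1 := hstart2 f hf hfe'
        rwa [hfeq, eL_mk, min_eq_left hcd.le] at h1
      have hac : a < c := lt_trans hle ha'c
      have hcb_lt : c < b := by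
        rcases (G.ne_of_adj hbc).lt_or_gt with h | h
        · exact (hL1 a b c hab h hAab hbc).elim
        · exact h
      have hAa'd : G.Adj a' d := by
        rcases hL2 a a' d hle (lt_trans ha'c hcd) had with h | h
        · exact (hL1 a a' b' hle ha'b' h hAa'b').elim
        · exact h
      have hdisjf : ∀ x ∈ e', x ∉ f := hM.1.2 e' hstart.1 f hf (Ne.symm hfe')
      have hb'f := hdisjf b' hmemb'
      rw [hfeq] at hb'f
      have hb'c : b' ≠ c := fun h => hb'f (by rw [h]; exact Sym2.mem_mk_left _ _)
      have hb'd : b' ≠ d := fun h => hb'f (by rw [h]; exact Sym2.mem_mk_right _ _)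
      rcases hb'c.lt_or_gt with h1 | h1
      · -- b' < c
        have hAab'2 : G.Adj a b' := by
          rcases hL2 a b' d (lt_trans hle ha'b') (lt_trans h1 hcd) had with h | h
          · exact h
          · exact (hL1 a' b' d ha'b' (lt_trans h1 hcd) hAa'b' h).elim
        have hAa'b : G.Adj a' b := by
          rcases hL2 a a' b hle (lt_trans ha'c hcb_lt) hAab with h | h
          · exact (hL1 a a' b' hle ha'b' h hAa'b').elim
          · exact h
        exact noC4ee' ⟨a, b, b', a', ne_of_lt hab, h_ab', ne_of_lt hle, h_bb', h_ba',
          ne_of_gt ha'b', (by rw [← heq]; exact hemem),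
          (by rw [Sym2.eq_swap, ← heq']; exact he'mem), hAab'2, hAa'b.symm⟩
      · -- c < b'
        have hAcb' : G.Adj c b' := by
          rcases hL2 a' c b' ha'c h1 hAa'b' with h | h
          · exact (hL1 a' c d ha'c hcd h hAcd).elim
          · exact h
        exact noC4M ⟨a', b', d, c, ne_of_lt ha'b', ne_of_lt (lt_trans ha'c hcd),
          ne_of_lt ha'c, hb'd, hb'c, Ne.symm (G.ne_of_adj hAcd),
          (by rw [← heq']; exact hstart.1),
          (by rw [Sym2.eq_swap, ← hfeq]; exact hf), hAa'd, hAcb'.symm⟩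
  -- Part 4 : no alternating C4 in {e} ∪ M
  have noC4eM : ¬ HasAltC4 G ({e} ∪ M) := by
    have inner : ∀ x y : V, s(x, y) ∈ M → G.Adj a x → G.Adj b y → False := by
      intro x y hxy hax hby
      obtain ⟨c, d, hfeq, hcd, -, -, -⟩ := edge_decomp (hM.1.1 hxy)
      rcases Sym2.eq_iff.mp hfeq with ⟨rfl, rfl⟩ | ⟨rfl, rfl⟩
      · exact hACsame _ hxy x y rfl hcd hax hby
      · exact hACine _ hxy y x Sym2.eq_swap hcd hax hby
    have key : ∀ p q p' q' : V, s(p, q) = e → s(p', q') ∈ M →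
        G.Adj p p' → G.Adj q q' → False := by
      intro p q p' q' hpe hp'M hadj1 hadj2
      have hpe2 : s(p, q) = s(a, b) := by rw [hpe, heq]
      rcases Sym2.eq_iff.mp hpe2 with ⟨rfl, rfl⟩ | ⟨rfl, rfl⟩
      · exact inner p' q' hp'M hadj1 hadj2
      · exact inner q' p' (by rw [Sym2.eq_swap]; exact hp'M) hadj2 hadj1
    rintro ⟨u, v, u', v', d1, d2, d3, d4, d5, d6, m1, m2, adj1, adj2⟩
    rcases m1 with m1 | m1
    · rw [Set.mem_singleton_iff] at m1
      rcases m2 with m2 | m2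
      · rw [Set.mem_singleton_iff] at m2
        have : s(u, v) = s(u', v') := by rw [m1, m2]
        rcases Sym2.eq_iff.mp this with ⟨h1, -⟩ | ⟨h1, -⟩
        · exact d2 h1
        · exact d3 h1
      · exact key u v u' v' m1 m2 adj1 adj2
    · rcases m2 with m2 | m2
      · rw [Set.mem_singleton_iff] at m2
        exact key u' v' u v m2 m1 adj1.symm adj2.symm
      · exact noC4M ⟨u, v, u', v', d1, d2, d3, d4, d5, d6, m1, m2, adj1, adj2⟩
  -- Part 5 : {e} ∪ M is a matching
  have hmatch : IsMatchingSet G ({e} ∪ M) := by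
    constructor
    · rintro g (hg | hg)
      · rw [Set.mem_singleton_iff] at hg; subst hg; exact he
      · exact hM.1.1 hg
    · rintro f (hf | hf) g (hg | hg) hfg x hxf hxg
      · rw [Set.mem_singleton_iff] at hf hg; rw [hf, hg] at hfg; exact hfg rfl
      · rw [Set.mem_singleton_iff] at hf; subst hf; exact hdisjM g hg x hxf hxg
      · rw [Set.mem_singleton_iff] at hg; subst hg; exact hdisjM f hf x hxg hxf
      · exact hM.1.2 f hf g hg hfg x hxf hxg
  refine ⟨UR_of_noC4 htf hord hmatch noC4eM, Set.mem_union_left _ rfl, ?_⟩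
  intro f hf hfe
  rcases hf with hf | hf
  · exact absurd (Set.mem_singleton_iff.mp hf) hfe
  · rw [heLe]
    by_cases h : f = e'
    · rw [h, heLe']; exact hle
    · exact lt_trans hle (hstart2 f hf h)
end

section
/- Let G be a finite simple graph with an interval representation {I_v}_{v ∈ V(G)}, and define a digraph D on vertex set E(G) as follows: for distinct edges e = uv and e' = u'v' of G, there is an arc from e to e' in D if and only if (I_u ∪ I_v) ∩ (I_{u'} ∩ I_{v'}) ≠ ∅. Then a set S ⊆ E(G) is a strong independent set in D if and only if S is a uniquely restricted matching in G. -/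
section Stmt18Aux

variable {V : Type*} {G : SimpleGraph V} {a b : V → ℝ} {S : Set (Sym2 V)}

private lemma sym2_rep (e : Sym2 V) : ∃ u v, e = s(u,v) := by
  induction e using Sym2.ind with | _ u v => exact ⟨u, v, rfl⟩

private lemma sym2_iUnion (f : V → Set ℝ) (u v : V) :
    (⋃ x ∈ s(u,v), f x) = f u ∪ f v := by
  ext t; simp [Sym2.mem_iff]

private lemma sym2_iInter (f : V → Set ℝ) (u v : V) :
    (⋂ x ∈ s(u,v), f x) = f u ∩ f v := by
  ext t; simp [Sym2.mem_iff]

/-- The "strong independence" condition on `S` in the interval digraph. -/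
def ArcCond (a b : V → ℝ) (S : Set (Sym2 V)) : Prop :=
  ∀ e ∈ S, ∀ e' ∈ S, e ≠ e' →
        ¬ ((⋃ x ∈ e, Set.Icc (a x) (b x)) ∩ (⋂ x ∈ e', Set.Icc (a x) (b x))).Nonempty ∨
        ¬ ((⋃ x ∈ e', Set.Icc (a x) (b x)) ∩ (⋂ x ∈ e, Set.Icc (a x) (b x))).Nonempty

private lemma pair_contra (hC : ArcCond a b S) {u v u' v' : V}
    (he : s(u,v) ∈ S) (he' : s(u',v') ∈ S) (hne : s(u,v) ≠ s(u',v')) {t t' : ℝ}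
    (h1 : (a u ≤ t ∧ t ≤ b u) ∨ (a v ≤ t ∧ t ≤ b v))
    (h2 : a u' ≤ t) (h2' : t ≤ b u') (h3 : a v' ≤ t) (h3' : t ≤ b v')
    (h4 : (a u' ≤ t' ∧ t' ≤ b u') ∨ (a v' ≤ t' ∧ t' ≤ b v'))
    (h5 : a u ≤ t') (h5' : t' ≤ b u) (h6 : a v ≤ t') (h6' : t' ≤ b v) : False := by
  rcases hC _ he _ he' hne with h | h
  · refine h ⟨t, Set.mem_inter ?_ ?_⟩
    · rw [sym2_iUnion]
      rcases h1 with h1 | h1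
      · exact Or.inl (Set.mem_Icc.2 h1)
      · exact Or.inr (Set.mem_Icc.2 h1)
    · rw [sym2_iInter]
      exact ⟨Set.mem_Icc.2 ⟨h2, h2'⟩, Set.mem_Icc.2 ⟨h3, h3'⟩⟩
  · refine h ⟨t', Set.mem_inter ?_ ?_⟩
    · rw [sym2_iUnion]
      rcases h4 with h4 | h4
      · exact Or.inl (Set.mem_Icc.2 h4)
      · exact Or.inr (Set.mem_Icc.2 h4)
    · rw [sym2_iInter]
      exact ⟨Set.mem_Icc.2 ⟨h5, h5'⟩, Set.mem_Icc.2 ⟨h6, h6'⟩⟩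

variable (hab : ∀ v, a v ≤ b v)
  (hrep : ∀ u v : V, u ≠ v →
      (G.Adj u v ↔ (Set.Icc (a u) (b u) ∩ Set.Icc (a v) (b v)).Nonempty))

include hrep in
private lemma adj_le {x y : V} (h : G.Adj x y) : a x ≤ b y ∧ a y ≤ b x := by
  obtain ⟨t, ht⟩ := (hrep x y h.ne).1 h
  rw [Set.mem_inter_iff, Set.mem_Icc, Set.mem_Icc] at ht
  exact ⟨le_trans ht.1.1 ht.2.2, le_trans ht.2.1 ht.1.2⟩

include hab hrep in
private lemma adj_of {x y : V} (hxy : x ≠ y) (h1 : a x ≤ b y) (h2 : a y ≤ b x) :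
    G.Adj x y := by
  refine (hrep x y hxy).2 ⟨max (a x) (a y), ?_⟩
  rw [Set.mem_inter_iff, Set.mem_Icc, Set.mem_Icc]
  exact ⟨⟨le_max_left _ _, max_le (hab x) h2⟩, ⟨le_max_right _ _, max_le h1 (hab y)⟩⟩

include hab hrep in
private lemma matching_of_C (hC : ArcCond a b S) (hS : S ⊆ G.edgeSet) :
    IsMatchingSet G S := by
  refine ⟨hS, ?_⟩
  intro e he f hf hne x hxe hxf
  obtain ⟨u, rfl⟩ := (Sym2.mem_iff_exists).1 hxe
  obtain ⟨y, rfl⟩ := (Sym2.mem_iff_exists).1 hxf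
  have hxu : G.Adj x u := (SimpleGraph.mem_edgeSet G).1 (hS he)
  have hxy : G.Adj x y := (SimpleGraph.mem_edgeSet G).1 (hS hf)
  obtain ⟨hu1, hu2⟩ := adj_le hrep hxu
  obtain ⟨hy1, hy2⟩ := adj_le hrep hxy
  exact pair_contra hC he hf hne (t := max (a x) (a y)) (t' := max (a x) (a u))
    (Or.inl ⟨le_max_left _ _, max_le (hab x) hy2⟩)
    (le_max_left _ _) (max_le (hab x) hy2) (le_max_right _ _) (max_le hy1 (hab y))
    (Or.inl ⟨le_max_left _ _, max_le (hab x) hu2⟩)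
    (le_max_left _ _) (max_le (hab x) hu2) (le_max_right _ _) (max_le hu1 (hab u))

private lemma swap_matching {M : Set (Sym2 V)} (hM : IsMatchingSet G M) {p q p' q' : V}
    (hpq : s(p,q) ∈ M) (hp'q' : s(p',q') ∈ M) (hne : s(p,q) ≠ s(p',q'))
    (hadj1 : G.Adj p p') (hadj2 : G.Adj q q') :
    IsMatchingSet G (insert s(p,p') (insert s(q,q') (M \ {s(p,q), s(p',q')}))) ∧
      matchedVerts (insert s(p,p') (insert s(q,q') (M \ {s(p,q), s(p',q')}))) = matchedVerts M := by
  have hpq2 : G.Adj p q := (SimpleGraph.mem_edgeSet G).1 (hM.1 hpq)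
  have hp'q'2 : G.Adj p' q' := (SimpleGraph.mem_edgeSet G).1 (hM.1 hp'q')
  have hnp : p ∉ s(p',q') := hM.2 _ hpq _ hp'q' hne p (Sym2.mem_mk_left _ _)
  have hnq : q ∉ s(p',q') := hM.2 _ hpq _ hp'q' hne q (Sym2.mem_mk_right _ _)
  have hpp' : p ≠ p' := fun h => hnp (h ▸ Sym2.mem_mk_left _ _)
  have hpq'' : p ≠ q' := fun h => hnp (h ▸ Sym2.mem_mk_right _ _)
  have hqp' : q ≠ p' := fun h => hnq (h ▸ Sym2.mem_mk_left _ _)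
  have hqq' : q ≠ q' := fun h => hnq (h ▸ Sym2.mem_mk_right _ _)
  have hPQ : p ≠ q := hpq2.ne
  have hP'Q' : p' ≠ q' := hp'q'2.ne
  have hold : ∀ r ∈ M \ ({s(p,q), s(p',q')} : Set (Sym2 V)),
      p ∉ r ∧ q ∉ r ∧ p' ∉ r ∧ q' ∉ r := by
    intro r hr
    obtain ⟨hrM, hrn⟩ := hr
    simp only [Set.mem_insert_iff, Set.mem_singleton_iff, not_or] at hrn
    exact ⟨hM.2 _ hpq _ hrM (Ne.symm hrn.1) p (Sym2.mem_mk_left _ _),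
      hM.2 _ hpq _ hrM (Ne.symm hrn.1) q (Sym2.mem_mk_right _ _),
      hM.2 _ hp'q' _ hrM (Ne.symm hrn.2) p' (Sym2.mem_mk_left _ _),
      hM.2 _ hp'q' _ hrM (Ne.symm hrn.2) q' (Sym2.mem_mk_right _ _)⟩
  constructor
  · constructor
    · intro r hr
      rcases hr with rfl | rfl | hr
      · exact (SimpleGraph.mem_edgeSet G).2 hadj1
      · exact (SimpleGraph.mem_edgeSet G).2 hadj2
      · exact hM.1 hr.1
    · intro e he f hf hef x hxe hxf
      rcases he with rfl | rfl | he <;> rcases hf with rfl | rfl | hf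
      · exact hef rfl
      · rw [Sym2.mem_iff] at hxe hxf
        rcases hxe with rfl | rfl <;> rcases hxf with h | h
        · exact hPQ h
        · exact hpq'' h
        · exact hqp' h.symm
        · exact hP'Q' h
      · rw [Sym2.mem_iff] at hxe
        obtain ⟨h1, h2, h3, h4⟩ := hold f hf
        rcases hxe with rfl | rfl
        · exact h1 hxf
        · exact h3 hxf
      · rw [Sym2.mem_iff] at hxe hxf
        rcases hxe with rfl | rfl <;> rcases hxf with h | h
        · exact hPQ h.symm
        · exact hqp' h
        · exact hpq'' h.symm
        · exact hP'Q' h.symm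
      · exact hef rfl
      · rw [Sym2.mem_iff] at hxe
        obtain ⟨h1, h2, h3, h4⟩ := hold f hf
        rcases hxe with rfl | rfl
        · exact h2 hxf
        · exact h4 hxf
      · rw [Sym2.mem_iff] at hxf
        obtain ⟨h1, h2, h3, h4⟩ := hold e he
        rcases hxf with rfl | rfl
        · exact h1 hxe
        · exact h3 hxe
      · rw [Sym2.mem_iff] at hxf
        obtain ⟨h1, h2, h3, h4⟩ := hold e he
        rcases hxf with rfl | rfl
        · exact h2 hxe
        · exact h4 hxe
      · exact hM.2 e he.1 f hf.1 hef x hxe hxf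
  · ext x
    constructor
    · rintro ⟨r, hr, hxr⟩
      rcases hr with rfl | rfl | hr
      · rw [Sym2.mem_iff] at hxr
        rcases hxr with rfl | rfl
        · exact ⟨_, hpq, Sym2.mem_mk_left _ _⟩
        · exact ⟨_, hp'q', Sym2.mem_mk_left _ _⟩
      · rw [Sym2.mem_iff] at hxr
        rcases hxr with rfl | rfl
        · exact ⟨_, hpq, Sym2.mem_mk_right _ _⟩
        · exact ⟨_, hp'q', Sym2.mem_mk_right _ _⟩
      · exact ⟨r, hr.1, hxr⟩
    · rintro ⟨r, hr, hxr⟩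
      by_cases h1 : r = s(p,q)
      · subst h1
        rw [Sym2.mem_iff] at hxr
        rcases hxr with h | h
        · exact ⟨s(p,p'), Set.mem_insert _ _, by rw [h]; exact Sym2.mem_mk_left _ _⟩
        · exact ⟨s(q,q'), Set.mem_insert_of_mem _ (Set.mem_insert _ _),
            by rw [h]; exact Sym2.mem_mk_left _ _⟩
      · by_cases h2 : r = s(p',q')
        · subst h2
          rw [Sym2.mem_iff] at hxr
          rcases hxr with h | h
          · exact ⟨s(p,p'), Set.mem_insert _ _, by rw [h]; exact Sym2.mem_mk_right _ _⟩
          · exact ⟨s(q,q'), Set.mem_insert_of_mem _ (Set.mem_insert _ _),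
              by rw [h]; exact Sym2.mem_mk_right _ _⟩
        · exact ⟨r, Set.mem_insert_of_mem _ (Set.mem_insert_of_mem _ ⟨hr, by simp [h1, h2]⟩), hxr⟩

private lemma eq_of_subset (hMS : IsMatchingSet G S) {M' : Set (Sym2 V)} (hsub : M' ⊆ S)
    (hmv : matchedVerts M' = matchedVerts S) : M' = S := by
  refine Set.Subset.antisymm hsub ?_
  intro e heS
  obtain ⟨u, v, rfl⟩ := sym2_rep e
  have hu : u ∈ matchedVerts S := ⟨_, heS, Sym2.mem_mk_left _ _⟩
  rw [← hmv] at hu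
  obtain ⟨f, hfM, huf⟩ := hu
  have hfS := hsub hfM
  by_contra hne
  have hne2 : f ≠ s(u,v) := fun h => hne (h ▸ hfM)
  exact hMS.2 f hfS _ heS hne2 u huf (Sym2.mem_mk_left _ _)

include hab hrep in
private lemma key [Finite V] (hC : ArcCond a b S) (hS : S ⊆ G.edgeSet)
    (hMS : IsMatchingSet G S) :
    ∀ n (M' : Set (Sym2 V)), IsMatchingSet G M' → matchedVerts M' = matchedVerts S →
      (M' \ S).ncard ≤ n → M' = S := by
  intro n
  induction n with
  | zero =>
    intro M' hM' hmv hcard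
    have h0 : (M' \ S).ncard = 0 := Nat.le_zero.1 hcard
    have hemp : M' \ S = ∅ := (Set.ncard_eq_zero (Set.toFinite _)).1 h0
    exact eq_of_subset hMS (Set.diff_eq_empty.1 hemp) hmv
  | succ n IH =>
    intro M' hM' hmv hcard
    by_cases hle : (M' \ S).ncard ≤ n
    · exact IH M' hM' hmv hle
    have hdne : (M' \ S).Nonempty := by
      rcases Set.eq_empty_or_nonempty (M' \ S) with h | h
      · exfalso; apply hle; rw [h]; simp
      · exact h
    -- there is an edge of S not in M'
    obtain ⟨f0, hf0⟩ := hdne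
    obtain ⟨p0, q0, hf0eq⟩ := sym2_rep f0
    have hp0 : p0 ∈ matchedVerts S := by
      rw [← hmv]
      exact ⟨f0, hf0.1, by rw [hf0eq]; exact Sym2.mem_mk_left _ _⟩
    obtain ⟨e0, he0S, hp0e0⟩ := hp0
    have he0M : e0 ∉ M' := by
      intro h
      have hne2 : e0 ≠ f0 := fun hh => hf0.2 (hh ▸ he0S)
      exact hM'.2 e0 h f0 hf0.1 hne2 p0 hp0e0 (by rw [hf0eq]; exact Sym2.mem_mk_left _ _)
    -- minimize b over X = matchedVerts (S \ M')
    have hXne : (matchedVerts (S \ M')).Nonempty := ⟨p0, e0, ⟨he0S, he0M⟩, hp0e0⟩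
    obtain ⟨us, husX, hmin⟩ := Set.exists_min_image (matchedVerts (S \ M')) b
      (Set.toFinite _) hXne
    obtain ⟨estar, hestarSM, hue⟩ := husX
    obtain ⟨vs, hesteq⟩ := (Sym2.mem_iff_exists).1 hue
    subst hesteq
    have heS : s(us,vs) ∈ S := hestarSM.1
    have heM : s(us,vs) ∉ M' := hestarSM.2
    have hadjuv : G.Adj us vs := (SimpleGraph.mem_edgeSet G).1 (hS heS)
    have huv : us ≠ vs := hadjuv.ne
    obtain ⟨hauv1, hauv2⟩ := adj_le hrep hadjuv
    have hvX : vs ∈ matchedVerts (S \ M') := ⟨_, hestarSM, Sym2.mem_mk_right _ _⟩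
    have hbuv : b us ≤ b vs := hmin vs hvX
    -- the M'-partner w of us
    have hu_mv : us ∈ matchedVerts M' := by
      rw [hmv]; exact ⟨_, heS, Sym2.mem_mk_left _ _⟩
    obtain ⟨fu, hfuM, hufu⟩ := hu_mv
    obtain ⟨w, hfueq⟩ := (Sym2.mem_iff_exists).1 hufu
    subst hfueq
    have hfune : s(us,w) ≠ s(us,vs) := fun h => heM (h ▸ hfuM)
    have hwv : w ≠ vs := fun h => hfune (by rw [h])
    have hadjuw : G.Adj us w := (SimpleGraph.mem_edgeSet G).1 (hM'.1 hfuM)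
    have huw : us ≠ w := hadjuw.ne
    obtain ⟨hauw1, hauw2⟩ := adj_le hrep hadjuw
    have hfuS : s(us,w) ∉ S :=
      fun h => hMS.2 _ h _ heS hfune us (Sym2.mem_mk_left _ _) (Sym2.mem_mk_left _ _)
    -- the S-edge of w
    have hw_mv : w ∈ matchedVerts S := by
      rw [← hmv]; exact ⟨_, hfuM, Sym2.mem_mk_right _ _⟩
    obtain ⟨Ew, hEwS, hwEw⟩ := hw_mv
    have hEwM : Ew ∉ M' := by
      intro h
      have hne2 : Ew ≠ s(us,w) := fun hh => hfuS (hh ▸ hEwS)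
      exact hM'.2 Ew h _ hfuM hne2 w hwEw (Sym2.mem_mk_right _ _)
    obtain ⟨z, hEweq⟩ := (Sym2.mem_iff_exists).1 hwEw
    subst hEweq
    have hEwne : s(us,vs) ≠ s(w,z) := by
      intro h
      have hmem : w ∈ s(us,vs) := by rw [h]; exact Sym2.mem_mk_left _ _
      rw [Sym2.mem_iff] at hmem
      rcases hmem with h' | h'
      · exact huw h'.symm
      · exact hwv h'
    have hadjwz : G.Adj w z := (SimpleGraph.mem_edgeSet G).1 (hS hEwS)
    have hwX : w ∈ matchedVerts (S \ M') := ⟨_, ⟨hEwS, hEwM⟩, Sym2.mem_mk_left _ _⟩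
    have hzX : z ∈ matchedVerts (S \ M') := ⟨_, ⟨hEwS, hEwM⟩, Sym2.mem_mk_right _ _⟩
    have hbw : b us ≤ b w := hmin w hwX
    have hbz : b us ≤ b z := hmin z hzX
    obtain ⟨hawz1, hawz2⟩ := adj_le hrep hadjwz
    -- K-intervals disjoint : a z > b us
    have haz : b us < a z := by
      by_contra h
      push_neg at h
      exact pair_contra hC heS hEwS hEwne (t := b us) (t' := b us)
        (Or.inl ⟨hab us, le_refl _⟩) hauw2 hbw h hbz
        (Or.inl ⟨hauw2, hbw⟩) (hab us) (le_refl _) hauv2 hbuv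
    -- b vs < a z
    have hbv : b vs < a z := by
      by_contra h
      push_neg at h
      exact pair_contra hC heS hEwS hEwne (t := a z) (t' := b us)
        (Or.inr ⟨le_trans hauv2 (le_of_lt haz), h⟩)
        (le_trans hauw2 (le_of_lt haz)) hawz2 (le_refl _) (hab z)
        (Or.inl ⟨hauw2, hbw⟩) (hab us) (le_refl _) hauv2 hbuv
    -- the M'-partner w' of vs
    have hv_mv : vs ∈ matchedVerts M' := by
      rw [hmv]; exact ⟨_, heS, Sym2.mem_mk_right _ _⟩
    obtain ⟨fv, hfvM, hvfv⟩ := hv_mv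
    obtain ⟨w', hfveq⟩ := (Sym2.mem_iff_exists).1 hvfv
    subst hfveq
    have hfvne : s(vs,w') ≠ s(us,vs) := fun h => heM (h ▸ hfvM)
    have hw'u : w' ≠ us := by
      intro h
      apply hfvne
      rw [h]
      exact Sym2.eq_swap
    have hadjvw' : G.Adj vs w' := (SimpleGraph.mem_edgeSet G).1 (hM'.1 hfvM)
    obtain ⟨havw1, havw2⟩ := adj_le hrep hadjvw'
    have hfvS : s(vs,w') ∉ S :=
      fun h => hMS.2 _ h _ heS hfvne vs (Sym2.mem_mk_left _ _) (Sym2.mem_mk_right _ _)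
    have hfufv : s(us,w) ≠ s(vs,w') := by
      intro h
      have hmem : us ∈ s(vs,w') := by rw [← h]; exact Sym2.mem_mk_left _ _
      rw [Sym2.mem_iff] at hmem
      rcases hmem with h' | h'
      · exact huv h'
      · exact hw'u h'.symm
    have hww' : w ≠ w' := by
      intro h
      exact hM'.2 _ hfuM _ hfvM hfufv w (Sym2.mem_mk_right _ _) (h ▸ Sym2.mem_mk_right _ _)
    -- w' ∈ X
    have hw'_mv : w' ∈ matchedVerts S := by
      rw [← hmv]; exact ⟨_, hfvM, Sym2.mem_mk_right _ _⟩
    obtain ⟨E', hE'S, hw'E'⟩ := hw'_mv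
    have hE'M : E' ∉ M' := by
      intro h
      have hne2 : E' ≠ s(vs,w') := fun hh => hfvS (hh ▸ hE'S)
      exact hM'.2 E' h _ hfvM hne2 w' hw'E' (Sym2.mem_mk_right _ _)
    have hw'X : w' ∈ matchedVerts (S \ M') := ⟨E', ⟨hE'S, hE'M⟩, hw'E'⟩
    have hbw' : b us ≤ b w' := hmin w' hw'X
    by_cases hw'Ew : w' ∈ s(w,z)
    · -- then w' = z, contradiction
      exfalso
      rw [Sym2.mem_iff] at hw'Ew
      rcases hw'Ew with h | h
      · exact hww' h.symm
      · rw [h] at havw2; linarith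
    · -- main case : swap
      have hgS : s(w,w') ∉ S := by
        intro h
        have hne2 : s(w,w') ≠ s(w,z) := fun hh => hw'Ew (hh ▸ Sym2.mem_mk_right _ _)
        exact hMS.2 _ h _ hEwS hne2 w (Sym2.mem_mk_left _ _) (Sym2.mem_mk_left _ _)
      have hadjww' : G.Adj w w' := by
        refine adj_of hab hrep hww' (le_trans hauw2 hbw') ?_
        calc a w' ≤ b vs := havw2
        _ ≤ a z := le_of_lt hbv
        _ ≤ b w := hawz2
      obtain ⟨hM''match, hM''mv⟩ := swap_matching hM' hfuM hfvM hfufv hadjuv hadjww'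
      have hfuT : s(us,w) ∈ M' \ S := ⟨hfuM, hfuS⟩
      have hfvT : s(vs,w') ∈ M' \ S := ⟨hfvM, hfvS⟩
      have hpair_sub : ({s(us,w), s(vs,w')} : Set (Sym2 V)) ⊆ M' \ S := by
        intro r hr
        rcases hr with rfl | hr
        · exact hfuT
        · rw [Set.mem_singleton_iff] at hr; rw [hr]; exact hfvT
      have hsub2 : (insert s(us,vs) (insert s(w,w') (M' \ {s(us,w), s(vs,w')}))) \ S ⊆
          insert s(w,w') ((M' \ S) \ {s(us,w), s(vs,w')}) := by
        rintro r ⟨hr, hrS⟩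
        rcases hr with rfl | rfl | hr
        · exact absurd heS hrS
        · exact Set.mem_insert _ _
        · exact Set.mem_insert_of_mem _ ⟨⟨hr.1, hrS⟩, hr.2⟩
      have hcard2 : ((insert s(us,vs) (insert s(w,w') (M' \ {s(us,w), s(vs,w')}))) \ S).ncard ≤ n := by
        have h1 := Set.ncard_le_ncard hsub2 (Set.toFinite _)
        have h1' := Set.ncard_insert_le s(w,w') ((M' \ S) \ {s(us,w), s(vs,w')})
        have h2 : ((M' \ S) \ {s(us,w), s(vs,w')}).ncard = (M' \ S).ncard - 2 := by
          rw [Set.ncard_diff hpair_sub (Set.toFinite _), Set.ncard_pair hfufv]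
        have h3 : 2 ≤ (M' \ S).ncard := by
          have h4 := Set.ncard_le_ncard hpair_sub (Set.toFinite _)
          rwa [Set.ncard_pair hfufv] at h4
        omega
      have hM''eq := IH _ hM''match (hM''mv.trans hmv) hcard2
      exfalso
      apply hgS
      rw [← hM''eq]
      exact Set.mem_insert_of_mem _ (Set.mem_insert _ _)

private lemma core (hMS : IsMatchingSet G S)
    (hUR : ∀ M', IsMatchingSet G M' → matchedVerts M' = matchedVerts S → M' = S)
    {u v u' v' : V} (he : s(u,v) ∈ S) (he' : s(u',v') ∈ S) (hne : s(u,v) ≠ s(u',v'))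
    (hadj1 : G.Adj u u') (hadj2 : G.Adj v v') : False := by
  obtain ⟨hmatch, hmv⟩ := swap_matching hMS he he' hne hadj1 hadj2
  have heq := hUR _ hmatch hmv
  have hg : s(u,u') ∈ S := by rw [← heq]; exact Set.mem_insert _ _
  have hvn : v ∉ s(u',v') := hMS.2 _ he _ he' hne v (Sym2.mem_mk_right _ _)
  have hne2 : s(u,u') ≠ s(u,v) := by
    intro h
    have h' : u' = v := Sym2.congr_right.1 h
    exact hvn (by rw [← h']; exact Sym2.mem_mk_left _ _)
  exact hMS.2 _ hg _ he hne2 u (Sym2.mem_mk_left _ _) (Sym2.mem_mk_left _ _)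

end Stmt18Aux

theorem stmt18 {V : Type*} [Fintype V] (G : SimpleGraph V) (a b : V → ℝ)
    (hab : ∀ v, a v ≤ b v)
    (hrep : ∀ u v : V, u ≠ v →
      (G.Adj u v ↔ (Set.Icc (a u) (b u) ∩ Set.Icc (a v) (b v)).Nonempty))
    (S : Set (Sym2 V)) (hS : S ⊆ G.edgeSet) :
    (∀ e ∈ S, ∀ e' ∈ S, e ≠ e' →
        ¬ ((⋃ x ∈ e, Set.Icc (a x) (b x)) ∩ (⋂ x ∈ e', Set.Icc (a x) (b x))).Nonempty ∨
        ¬ ((⋃ x ∈ e', Set.Icc (a x) (b x)) ∩ (⋂ x ∈ e, Set.Icc (a x) (b x))).Nonempty) ↔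
      UniquelyRestricted G S := by
  constructor
  · intro hC
    have hC' : ArcCond a b S := hC
    have hMS := matching_of_C hab hrep hC' hS
    refine ⟨hMS, ?_⟩
    intro M' hM' hmv
    exact key hab hrep hC' hS hMS (M' \ S).ncard M' hM' hmv le_rfl
  · intro hUR
    intro e he e' he' hnee
    by_contra hcon
    push_neg at hcon
    obtain ⟨⟨t, ht⟩, ⟨t', ht'⟩⟩ := hcon
    obtain ⟨u, v, rfl⟩ := sym2_rep e
    obtain ⟨u', v', rfl⟩ := sym2_rep e'
    rw [Set.mem_inter_iff, sym2_iUnion, sym2_iInter] at ht ht'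
    simp only [Set.mem_union, Set.mem_inter_iff, Set.mem_Icc] at ht ht'
    have hMS := hUR.1
    have hd : ∀ x, x ∈ s(u,v) → x ∉ s(u',v') := hMS.2 _ he _ he' hnee
    have hd' : ∀ x, x ∈ s(u',v') → x ∉ s(u,v) := hMS.2 _ he' _ he (Ne.symm hnee)
    have huu' : u ≠ u' := fun h => hd u (Sym2.mem_mk_left _ _) (by rw [h]; exact Sym2.mem_mk_left _ _)
    have huv' : u ≠ v' := fun h => hd u (Sym2.mem_mk_left _ _) (by rw [h]; exact Sym2.mem_mk_right _ _)
    have hvu' : v ≠ u' := fun h => hd v (Sym2.mem_mk_right _ _) (by rw [h]; exact Sym2.mem_mk_left _ _)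
    have hvv' : v ≠ v' := fun h => hd v (Sym2.mem_mk_right _ _) (by rw [h]; exact Sym2.mem_mk_right _ _)
    have hesw : s(v,u) ∈ S := by rw [Sym2.eq_swap]; exact he
    have hesw' : s(v',u') ∈ S := by rw [Sym2.eq_swap]; exact he'
    obtain ⟨ht1, ht2, ht3⟩ := ht
    obtain ⟨ht1', ht2', ht3'⟩ := ht'
    rcases ht1 with hu1 | hv1 <;> rcases ht1' with hu1' | hv1'
    · -- t ∈ I_u, t' ∈ I_u' : new edges s(u,v'), s(v,u')
      have hne2 : s(u,v) ≠ s(v',u') := fun h => hnee (h.trans Sym2.eq_swap)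
      exact core hMS hUR.2 he hesw' hne2
        (adj_of hab hrep huv' (le_trans hu1.1 ht3.2) (le_trans ht3.1 hu1.2))
        (adj_of hab hrep hvu' (le_trans ht3'.1 hu1'.2) (le_trans hu1'.1 ht3'.2))
    · -- t ∈ I_u, t' ∈ I_v' : new edges s(u,u'), s(v,v')
      exact core hMS hUR.2 he he' hnee
        (adj_of hab hrep huu' (le_trans hu1.1 ht2.2) (le_trans ht2.1 hu1.2))
        (adj_of hab hrep hvv' (le_trans ht3'.1 hv1'.2) (le_trans hv1'.1 ht3'.2))
    · -- t ∈ I_v, t' ∈ I_u' : new edges s(v,v'), s(u,u')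
      have hne2 : s(v,u) ≠ s(v',u') :=
        fun h => hnee ((Sym2.eq_swap).trans (h.trans Sym2.eq_swap))
      exact core hMS hUR.2 hesw hesw' hne2
        (adj_of hab hrep hvv' (le_trans hv1.1 ht3.2) (le_trans ht3.1 hv1.2))
        (adj_of hab hrep huu' (le_trans ht2'.1 hu1'.2) (le_trans hu1'.1 ht2'.2))
    · -- t ∈ I_v, t' ∈ I_v' : new edges s(v,u'), s(u,v')
      have hne2 : s(v,u) ≠ s(u',v') := fun h => hnee ((Sym2.eq_swap).trans h)
      exact core hMS hUR.2 hesw he' hne2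
        (adj_of hab hrep hvu' (le_trans hv1.1 ht2.2) (le_trans ht2.1 hv1.2))
        (adj_of hab hrep huv' (le_trans ht2'.1 hv1'.2) (le_trans hv1'.1 ht2'.2))
end

section
/- For every even integer k ≥ 4, there exist a finite simple graph G admitting a transitive vertex ordering (i.e., a permutation graph) and a matching M in G such that G contains at least one alternating cycle with respect to M, and every alternating cycle with respect to M in G has length exactly k. -/
/-- There is an alternating cycle of length `n` with respect to `M` in `G`: an even
cycle in `G` every second edge of which belongs to `M`. -/
def IsAltCycle {V : Type*} (G : SimpleGraph V) (M : Set (Sym2 V)) (n : ℕ) : Prop :=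
  3 ≤ n ∧ Even n ∧ ∃ c : ℕ → V,
    (∀ i j, i < n → j < n → c i = c j → i = j) ∧
    c n = c 0 ∧
    (∀ i < n, G.Adj (c i) (c (i + 1))) ∧
    (∀ i < n, Even i → s(c i, c (i + 1)) ∈ M)


/-! ### Auxiliary construction for `stmt19` -/

def S19Q (k u v : ℕ) : Prop :=
  (u % 2 = 0 ∧ v % 2 = 1 ∧ u < v ∧ v ≤ u + 5) ∨ (u = k - 4 ∧ v = k - 2) ∨ (u = 1 ∧ v = 3)

def S19sig (k a : ℕ) : ℕ :=
  if a % 2 = 0 then (if a = k - 2 then k - 2 else a + 3)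
  else (if a = 1 then 1 else a - 3)

def S19G (k : ℕ) : SimpleGraph (Fin k) :=
  SimpleGraph.fromRel (fun u v => u.val < v.val ∧ S19sig k v.val < S19sig k u.val)

def S19M (k : ℕ) : Set (Sym2 (Fin k)) :=
  {e | ∃ u v : Fin k, e = s(u, v) ∧ u.val % 2 = 0 ∧ v.val = u.val + 1}

lemma S19half (k a b : ℕ) (hk2 : k % 2 = 0) (hk4 : 4 ≤ k) (hb : b < k) (hab : a < b) :
    S19sig k b < S19sig k a ↔ S19Q k a b := by
  unfold S19Q S19sig
  split_ifs <;> omega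

lemma S19Q_lt {k a b : ℕ} (hk4 : 4 ≤ k) (h : S19Q k a b) : a < b := by
  unfold S19Q at h; omega

lemma S19adj_iff {k : ℕ} (hk2 : k % 2 = 0) (hk4 : 4 ≤ k) (x y : Fin k) :
    (S19G k).Adj x y ↔ S19Q k x.val y.val ∨ S19Q k y.val x.val := by
  rw [S19G, SimpleGraph.fromRel_adj, ne_eq, Fin.ext_iff]
  constructor
  · rintro ⟨hne, ⟨h1, h2⟩ | ⟨h1, h2⟩⟩
    · exact Or.inl ((S19half k x.val y.val hk2 hk4 y.isLt h1).mp h2)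
    · exact Or.inr ((S19half k y.val x.val hk2 hk4 x.isLt h1).mp h2)
  · rintro (hQ | hQ)
    · have hlt := S19Q_lt hk4 hQ
      exact ⟨by omega, Or.inl ⟨hlt, (S19half k x.val y.val hk2 hk4 y.isLt hlt).mpr hQ⟩⟩
    · have hlt := S19Q_lt hk4 hQ
      exact ⟨by omega, Or.inr ⟨hlt, (S19half k y.val x.val hk2 hk4 x.isLt hlt).mpr hQ⟩⟩

lemma S19mem_M {k : ℕ} (x y : Fin k) :
    s(x, y) ∈ S19M k ↔
      (x.val % 2 = 0 ∧ y.val = x.val + 1) ∨ (y.val % 2 = 0 ∧ x.val = y.val + 1) := by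
  constructor
  · rintro ⟨u, v, he, hu, hv⟩
    rw [Sym2.eq_iff] at he
    rcases he with ⟨rfl, rfl⟩ | ⟨rfl, rfl⟩
    · exact Or.inl ⟨hu, hv⟩
    · exact Or.inr ⟨hu, hv⟩
  · rintro (⟨h1, h2⟩ | ⟨h1, h2⟩)
    · exact ⟨x, y, rfl, h1, h2⟩
    · exact ⟨y, x, Sym2.eq_swap, h1, h2⟩

lemma S19sig_lt_of_adj {k : ℕ} {x y : Fin k} (h : (S19G k).Adj x y) (hxy : x < y) :
    S19sig k y.val < S19sig k x.val := by
  rw [S19G, SimpleGraph.fromRel_adj] at h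
  rcases h.2 with ⟨h1, h2⟩ | ⟨h1, h2⟩
  · exact h2
  · have h3 : x.val < y.val := hxy
    exact absurd h3 (by omega)

lemma S19adj_of_sig {k : ℕ} {x y : Fin k} (hxy : x < y) (h : S19sig k y.val < S19sig k x.val) :
    (S19G k).Adj x y := by
  rw [S19G, SimpleGraph.fromRel_adj]
  exact ⟨Fin.ne_of_lt hxy, Or.inl ⟨hxy, h⟩⟩

lemma S19trans (k : ℕ) : ∀ u v w : Fin k, u < v → v < w →
    (((S19G k).Adj u v → (S19G k).Adj v w → (S19G k).Adj u w) ∧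
      ((S19G k).Adj u w → (S19G k).Adj u v ∨ (S19G k).Adj v w)) := by
  intro u v w huv hvw
  constructor
  · intro h1 h2
    exact S19adj_of_sig (huv.trans hvw)
      ((S19sig_lt_of_adj h2 hvw).trans (S19sig_lt_of_adj h1 huv))
  · intro h
    have hs := S19sig_lt_of_adj h (huv.trans hvw)
    by_cases hc : S19sig k v.val < S19sig k u.val
    · exact Or.inl (S19adj_of_sig huv hc)
    · exact Or.inr (S19adj_of_sig hvw (by omega))

lemma S19matching (k : ℕ) (hk2 : k % 2 = 0) (hk4 : 4 ≤ k) :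
    IsMatchingSet (S19G k) (S19M k) := by
  constructor
  · rintro e ⟨u, v, rfl, hu, hv⟩
    rw [SimpleGraph.mem_edgeSet, S19adj_iff hk2 hk4]
    unfold S19Q
    omega
  · rintro e ⟨u, v, rfl, hu, hv⟩ f ⟨u', v', rfl, hu', hv'⟩ hne x hxe hxf
    rw [Sym2.mem_iff] at hxe hxf
    have hvv : u.val = u'.val := by
      rcases hxe with rfl | rfl <;> rcases hxf with h | h <;>
        · have := congrArg Fin.val h
          omega
    have h1 : u = u' := Fin.ext hvv
    have h2 : v = v' := Fin.ext (by omega)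
    exact hne (by rw [h1, h2])

def S19cf (q i : ℕ) : ℕ :=
  if i % 2 = 0 then (if i = 0 then 0 else if i ≤ q then 2*i - 1 else 4*q - 2*i)
  else (if i = 1 then 1 else if i - 1 ≤ q then 2*i - 4 else 4*q - 2*i + 3)

lemma S19cf_zero (q : ℕ) : S19cf q 0 = 0 := by unfold S19cf; norm_num

lemma S19cf_one (q : ℕ) : S19cf q 1 = 1 := by unfold S19cf; norm_num

lemma S19cf_eu (q i : ℕ) (h2 : i % 2 = 0) (h0 : i ≠ 0) (h : i ≤ q) :
    S19cf q i = 2*i - 1 := by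
  unfold S19cf; rw [if_pos h2, if_neg h0, if_pos h]

lemma S19cf_ed (q i : ℕ) (h2 : i % 2 = 0) (h0 : i ≠ 0) (h : ¬ (i ≤ q)) :
    S19cf q i = 4*q - 2*i := by
  unfold S19cf; rw [if_pos h2, if_neg h0, if_neg h]

lemma S19cf_ou (q i : ℕ) (h2 : i % 2 = 1) (h1 : i ≠ 1) (h : i - 1 ≤ q) :
    S19cf q i = 2*i - 4 := by
  unfold S19cf; rw [if_neg (by omega), if_neg h1, if_pos h]

lemma S19cf_od (q i : ℕ) (h2 : i % 2 = 1) (h1 : i ≠ 1) (h : ¬ (i - 1 ≤ q)) :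
    S19cf q i = 4*q - 2*i + 3 := by
  unfold S19cf; rw [if_neg (by omega), if_neg h1, if_neg h]

lemma S19cf_lt (q i : ℕ) (hq : 2 ≤ q) (hi : i < 2*q) : S19cf q i < 2*q := by
  unfold S19cf; split_ifs <;> omega

lemma S19cf_inj (q : ℕ) (hq : 2 ≤ q) (i j : ℕ) (hi : i < 2*q) (hj : j < 2*q)
    (h : S19cf q i = S19cf q j) : i = j := by
  unfold S19cf at h; split_ifs at h <;> omega

lemma S19cf_M (q i : ℕ) (hq : 2 ≤ q) (hi : i < 2*q) (he : i % 2 = 0) :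
    (S19cf q i % 2 = 0 ∧ S19cf q (i+1) = S19cf q i + 1) ∨
    (S19cf q (i+1) % 2 = 0 ∧ S19cf q i = S19cf q (i+1) + 1) := by
  unfold S19cf; split_ifs <;> omega

set_option maxHeartbeats 1000000 in
lemma S19cf_E (k q i : ℕ) (hkq : k = 2*q) (hq : 2 ≤ q) (hi : i < 2*q) (ho : i % 2 = 1) :
    S19Q k (S19cf q i) (S19cf q ((i+1) % (2*q))) ∨
    S19Q k (S19cf q ((i+1) % (2*q))) (S19cf q i) := by
  by_cases h1 : i = 1
  · subst h1
    rw [Nat.mod_eq_of_lt (by omega), S19cf_one, S19cf_eu q 2 (by omega) (by omega) (by omega)]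
    unfold S19Q; omega
  · by_cases hup : i - 1 ≤ q
    · rw [S19cf_ou q i ho h1 hup]
      by_cases h2 : i + 1 ≤ q
      · rw [Nat.mod_eq_of_lt (by omega), S19cf_eu q (i+1) (by omega) (by omega) h2]
        unfold S19Q; omega
      · by_cases hw : i + 1 = 2*q
        · have hq2 : q = 2 := by omega
          rw [hw, Nat.mod_self, S19cf_zero]
          unfold S19Q; omega
        · rw [Nat.mod_eq_of_lt (by omega), S19cf_ed q (i+1) (by omega) (by omega) (by omega)]
          unfold S19Q; omega
    · rw [S19cf_od q i ho h1 hup]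
      by_cases hw : i + 1 = 2*q
      · rw [hw, Nat.mod_self, S19cf_zero]
        unfold S19Q; omega
      · rw [Nat.mod_eq_of_lt (by omega), S19cf_ed q (i+1) (by omega) (by omega) (by omega)]
        unfold S19Q; omega

set_option maxHeartbeats 1000000 in
lemma S19exists (k q : ℕ) (hkq : k = 2*q) (hq2 : 2 ≤ q) :
    IsAltCycle (S19G k) (S19M k) k := by
  have hk2 : k % 2 = 0 := by omega
  have hk4 : 4 ≤ k := by omega
  refine ⟨by omega, by rw [Nat.even_iff]; omega,
    fun i => ⟨S19cf q (i % (2*q)), by rw [hkq]; exact S19cf_lt q _ hq2 (Nat.mod_lt _ (by omega))⟩,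
    ?_, ?_, ?_, ?_⟩
  · intro i j hi hj hce
    have hval : S19cf q (i % (2*q)) = S19cf q (j % (2*q)) := congrArg Fin.val hce
    rw [Nat.mod_eq_of_lt (by omega), Nat.mod_eq_of_lt (by omega)] at hval
    exact S19cf_inj q hq2 i j (by omega) (by omega) hval
  · apply Fin.ext
    show S19cf q (k % (2*q)) = S19cf q (0 % (2*q))
    rw [Nat.zero_mod, hkq, Nat.mod_self]
  · intro i hi
    rw [S19adj_iff hk2 hk4]
    show S19Q k (S19cf q (i % (2*q))) (S19cf q ((i+1) % (2*q))) ∨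
      S19Q k (S19cf q ((i+1) % (2*q))) (S19cf q (i % (2*q)))
    rw [Nat.mod_eq_of_lt (show i < 2*q by omega)]
    rcases Nat.even_or_odd i with he | ho
    · have he' : i % 2 = 0 := Nat.even_iff.mp he
      rw [Nat.mod_eq_of_lt (show i + 1 < 2*q by omega)]
      have hM' := S19cf_M q i hq2 (by omega) he'
      unfold S19Q
      omega
    · exact S19cf_E k q i hkq hq2 (by omega) (Nat.odd_iff.mp ho)
  · intro i hi he
    have he' : i % 2 = 0 := Nat.even_iff.mp he
    rw [S19mem_M]
    show (S19cf q (i % (2*q)) % 2 = 0 ∧ S19cf q ((i+1) % (2*q)) = S19cf q (i % (2*q)) + 1) ∨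
      (S19cf q ((i+1) % (2*q)) % 2 = 0 ∧ S19cf q (i % (2*q)) = S19cf q ((i+1) % (2*q)) + 1)
    rw [Nat.mod_eq_of_lt (show i < 2*q by omega),
      Nat.mod_eq_of_lt (show i + 1 < 2*q by omega)]
    exact S19cf_M q i hq2 (by omega) he'

lemma S19unique (k q m : ℕ) (hkq : k = 2*q) (hq2 : 2 ≤ q)
    (h : IsAltCycle (S19G k) (S19M k) m) : m = k := by
  have hk2 : k % 2 = 0 := by omega
  have hk4 : 4 ≤ k := by omega
  obtain ⟨hm3, hme, c, hinj, hclose, hadj, hM⟩ := h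
  have hme' : m % 2 = 0 := Nat.even_iff.mp hme
  have hm4 : 4 ≤ m := by omega
  -- wrap: c (i+1) is on the cycle
  have hwrap : ∀ i, i < m → ∃ j, j < m ∧ c j = c (i+1) := by
    intro i hi
    rcases eq_or_lt_of_le (Nat.succ_le_of_lt hi) with h | h
    · exact ⟨0, by omega, by rw [← hclose, ← h]⟩
    · exact ⟨i+1, h, rfl⟩
  -- each cycle vertex has its M-partner on the cycle
  have hMedge : ∀ v : Fin k, (∃ j, j < m ∧ c j = v) →
      ∃ w : Fin k, (∃ j, j < m ∧ c j = w) ∧ s(v, w) ∈ S19M k := by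
    rintro v ⟨j, hj, rfl⟩
    rcases Nat.even_or_odd j with he | ho
    · obtain ⟨j', hj', hj'e⟩ := hwrap j hj
      exact ⟨c (j+1), ⟨j', hj', hj'e⟩, hM j hj he⟩
    · have hjo : j % 2 = 1 := Nat.odd_iff.mp ho
      have hj1 : j - 1 < m := by omega
      have hMe := hM (j-1) hj1 (by rw [Nat.even_iff]; omega)
      rw [show j - 1 + 1 = j by omega] at hMe
      exact ⟨c (j-1), ⟨j-1, hj1, rfl⟩, by rw [Sym2.eq_swap]; exact hMe⟩
  have hpartner_even : ∀ v : Fin k, (∃ j, j < m ∧ c j = v) → v.val % 2 = 0 →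
      ∃ j, j < m ∧ (c j).val = v.val + 1 := by
    intro v hv hpar
    obtain ⟨w, ⟨j, hj, hcj⟩, hmem⟩ := hMedge v hv
    rw [S19mem_M] at hmem
    exact ⟨j, hj, by rw [hcj]; omega⟩
  have hpartner_odd : ∀ v : Fin k, (∃ j, j < m ∧ c j = v) → v.val % 2 = 1 →
      ∃ j, j < m ∧ (c j).val + 1 = v.val := by
    intro v hv hpar
    obtain ⟨w, ⟨j, hj, hcj⟩, hmem⟩ := hMedge v hv
    rw [S19mem_M] at hmem
    exact ⟨j, hj, by rw [hcj]; omega⟩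
  -- existence of an odd-index edge at every cycle vertex
  have hOddIdx : ∀ v : Fin k, (∃ j, j < m ∧ c j = v) →
      ∃ i, i < m ∧ i % 2 = 1 ∧ (c i = v ∨ c (i+1) = v) := by
    rintro v ⟨j, hj, rfl⟩
    rcases Nat.even_or_odd j with he | ho
    · have hje : j % 2 = 0 := Nat.even_iff.mp he
      rcases Nat.eq_zero_or_pos j with rfl | hpos
      · refine ⟨m-1, by omega, by omega, Or.inr ?_⟩
        rw [show m - 1 + 1 = m by omega, hclose]
      · exact ⟨j-1, by omega, by omega, Or.inr (by rw [show j-1+1 = j by omega])⟩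
    · exact ⟨j, hj, Nat.odd_iff.mp ho, Or.inl rfl⟩
  -- uniqueness of the odd-index edge at a vertex
  have hOddUniq : ∀ i i', i < m → i' < m → i % 2 = 1 → i' % 2 = 1 → ∀ v : Fin k,
      (c i = v ∨ c (i+1) = v) → (c i' = v ∨ c (i'+1) = v) → i = i' := by
    intro i i' hi hi' hoi hoi' v h1 h2
    rcases h1 with h1 | h1 <;> rcases h2 with h2 | h2
    · exact hinj i i' hi hi' (h1.trans h2.symm)
    · by_cases hw : i' + 1 = m
      · rw [hw, hclose] at h2
        have := hinj i 0 hi (by omega) (h1.trans h2.symm); omega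
      · have := hinj i (i'+1) hi (by omega) (h1.trans h2.symm); omega
    · by_cases hw : i + 1 = m
      · rw [hw, hclose] at h1
        have := hinj 0 i' (by omega) hi' (h1.trans h2.symm); omega
      · have := hinj (i+1) i' (by omega) hi' (h1.trans h2.symm); omega
    · by_cases hw : i + 1 = m
      · by_cases hw' : i' + 1 = m
        · omega
        · rw [hw, hclose] at h1
          have := hinj 0 (i'+1) (by omega) (by omega) (h1.trans h2.symm); omega
      · by_cases hw' : i' + 1 = m
        · rw [hw', hclose] at h2
          have := hinj (i+1) 0 (by omega) (by omega) (h1.trans h2.symm); omega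
        · have := hinj (i+1) (i'+1) (by omega) (by omega) (h1.trans h2.symm); omega
  -- odd-index edges are not in M
  have hOddNotM : ∀ i, i < m → i % 2 = 1 → s(c i, c (i+1)) ∉ S19M k := by
    intro i hi hio hmem
    have hi1 : i - 1 < m := by omega
    have hMe := hM (i-1) hi1 (by rw [Nat.even_iff]; omega)
    rw [show i - 1 + 1 = i by omega] at hMe
    rw [S19mem_M] at hmem hMe
    have hvv : (c (i-1)).val = (c (i+1)).val := by omega
    have hcc : c (i-1) = c (i+1) := Fin.ext hvv
    by_cases hw : i + 1 = m
    · rw [hw, hclose] at hcc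
      have := hinj (i-1) 0 hi1 (by omega) hcc; omega
    · have := hinj (i-1) (i+1) hi1 (by omega) hcc; omega
  -- both endpoints of any cycle edge are on the cycle
  have hEon : ∀ i, i < m → ∀ x y : Fin k, s(c i, c (i+1)) = s(x, y) →
      (∃ j, j < m ∧ c j = x) ∧ (∃ j, j < m ∧ c j = y) := by
    intro i hi x y he
    rw [Sym2.eq_iff] at he
    obtain ⟨j', hj', hj'e⟩ := hwrap i hi
    rcases he with ⟨h1, h2⟩ | ⟨h1, h2⟩
    · exact ⟨⟨i, hi, h1⟩, ⟨j', hj', hj'e.trans h2⟩⟩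
    · exact ⟨⟨j', hj', hj'e.trans h2⟩, ⟨i, hi, h1⟩⟩
  -- extraction of "the" non-matching neighbor
  have hOddE_ex : ∀ v : Fin k, (∃ j, j < m ∧ c j = v) →
      ∃ w : Fin k, (∃ j, j < m ∧ c j = w) ∧ (S19G k).Adj v w ∧ s(v, w) ∉ S19M k ∧
        (∃ i, i < m ∧ i % 2 = 1 ∧ s(c i, c (i+1)) = s(v, w)) := by
    intro v hv
    obtain ⟨i, hi, hio, hor⟩ := hOddIdx v hv
    rcases hor with hcv | hcv
    · refine ⟨c (i+1), hwrap i hi, ?_, ?_, ⟨i, hi, hio, by rw [hcv]⟩⟩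
      · rw [← hcv]; exact hadj i hi
      · rw [← hcv]; exact hOddNotM i hi hio
    · refine ⟨c i, ⟨i, hi, rfl⟩, ?_, ?_, ⟨i, hi, hio, by rw [hcv, Sym2.eq_swap]⟩⟩
      · rw [← hcv]; exact (hadj i hi).symm
      · rw [← hcv, Sym2.eq_swap]; exact hOddNotM i hi hio
  -- uniqueness of the non-matching neighbor
  have hOddE_uniq : ∀ v w w' : Fin k,
      (∃ i, i < m ∧ i % 2 = 1 ∧ s(c i, c (i+1)) = s(v, w)) →
      (∃ i, i < m ∧ i % 2 = 1 ∧ s(c i, c (i+1)) = s(v, w')) → w = w' := by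
    rintro v w w' ⟨i, hi, hio, hie⟩ ⟨i', hi', hio', hie'⟩
    have h1 : c i = v ∨ c (i+1) = v := by
      rw [Sym2.eq_iff] at hie; tauto
    have h2 : c i' = v ∨ c (i'+1) = v := by
      rw [Sym2.eq_iff] at hie'; tauto
    have hii : i = i' := hOddUniq i i' hi hi' hio hio' v h1 h2
    subst hii
    have : s(v, w) = s(v, w') := hie.symm.trans hie'
    rw [Sym2.eq_iff] at this
    rcases this with ⟨_, h⟩ | ⟨h1, h2⟩
    · exact h
    · exact h2.trans h1
  obtain ⟨v1, hv1⟩ : ∃ v : Fin k, v.val = 1 := ⟨⟨1, by omega⟩, rfl⟩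
  obtain ⟨v3, hv3⟩ : ∃ v : Fin k, v.val = 3 := ⟨⟨3, by omega⟩, rfl⟩
  -- every alternating cycle reaches vertices 0 and 1
  have hbase : ∀ a : ℕ, ∀ v : Fin k, v.val = a → v.val % 2 = 1 → (∃ j, j < m ∧ c j = v) →
      (∃ j, j < m ∧ (c j).val = 0) ∧ (∃ j, j < m ∧ (c j).val = 1) := by
    intro a
    induction a using Nat.strong_induction_on with
    | _ a ih =>
      intro v hva hodd hOn
      obtain ⟨w, hwOn, hadjvw, hnM, hE⟩ := hOddE_ex v hOn
      have hQ := (S19adj_iff hk2 hk4 v w).mp hadjvw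
      have hnM' : ¬((v.val % 2 = 0 ∧ w.val = v.val + 1) ∨ (w.val % 2 = 0 ∧ v.val = w.val + 1)) :=
        fun hh => hnM ((S19mem_M v w).mpr hh)
      have hvlt := v.isLt
      have hwlt := w.isLt
      by_cases h1 : v.val = 1
      · obtain ⟨j0, hj0, hj0v⟩ := hpartner_odd v hOn (by omega)
        obtain ⟨j1, hj1, hj1v⟩ := hOn
        exact ⟨⟨j0, hj0, by omega⟩, ⟨j1, hj1, by rw [hj1v]; omega⟩⟩
      · by_cases h3 : v.val = 3
        · have hw01 : w.val = 0 ∨ w.val = 1 := by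
            unfold S19Q at hQ; omega
          rcases hw01 with hw0 | hw1
          · obtain ⟨j1, hj1, hj1v⟩ := hpartner_even w hwOn (by omega)
            obtain ⟨j0, hj0, hj0v⟩ := hwOn
            exact ⟨⟨j0, hj0, by rw [hj0v]; omega⟩, ⟨j1, hj1, by omega⟩⟩
          · obtain ⟨j0, hj0, hj0v⟩ := hpartner_odd w hwOn (by omega)
            obtain ⟨j1, hj1, hj1v⟩ := hwOn
            exact ⟨⟨j0, hj0, by omega⟩, ⟨j1, hj1, by rw [hj1v]; omega⟩⟩
        · have hv5 : 5 ≤ v.val := by omega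
          have hw : w.val % 2 = 0 ∧ (w.val + 3 = v.val ∨ w.val + 5 = v.val) := by
            unfold S19Q at hQ; omega
          obtain ⟨j, hj, hjv⟩ := hpartner_even w hwOn hw.1
          exact ih ((c j).val) (by omega) (c j) rfl (by omega) ⟨j, hj, rfl⟩
  -- the cycle is nonempty, so 0 and 1 are on it
  have h01 : (∃ j, j < m ∧ (c j).val = 0) ∧ (∃ j, j < m ∧ (c j).val = 1) := by
    rcases Nat.even_or_odd (c 0).val with he | ho
    · have he' : (c 0).val % 2 = 0 := Nat.even_iff.mp he
      obtain ⟨j, hj, hjv⟩ := hpartner_even (c 0) ⟨0, by omega, rfl⟩ he'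
      exact hbase ((c j).val) (c j) rfl (by omega) ⟨j, hj, rfl⟩
    · exact hbase ((c 0).val) (c 0) rfl (Nat.odd_iff.mp ho) ⟨0, by omega, rfl⟩
  obtain ⟨⟨j0, hj0, hj0v⟩, ⟨j1, hj1, hj1v⟩⟩ := h01
  have hOn1 : ∃ j, j < m ∧ c j = v1 := ⟨j1, hj1, Fin.ext (by omega)⟩
  -- the edge {1,3} is forced
  obtain ⟨w13, hw13On, hadj13, hnM13, hE13⟩ := hOddE_ex v1 hOn1
  have hw13v : w13.val = 3 := by
    have hQ := (S19adj_iff hk2 hk4 v1 w13).mp hadj13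
    have hnM' : ¬((v1.val % 2 = 0 ∧ w13.val = v1.val + 1) ∨
        (w13.val % 2 = 0 ∧ v1.val = w13.val + 1)) :=
      fun hh => hnM13 ((S19mem_M v1 w13).mpr hh)
    have hwlt := w13.isLt
    unfold S19Q at hQ
    omega
  have hOn3 : ∃ j, j < m ∧ c j = v3 := by
    obtain ⟨j, hj, hjv⟩ := hw13On
    exact ⟨j, hj, hjv.trans (Fin.ext (by omega))⟩
  have hOn2 : ∃ j, j < m ∧ (c j).val = 2 := by
    obtain ⟨j, hj, hjv⟩ := hpartner_odd v3 hOn3 (by omega)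
    exact ⟨j, hj, by omega⟩
  have hE13' : ∃ i, i < m ∧ i % 2 = 1 ∧ s(c i, c (i+1)) = s(v3, v1) := by
    obtain ⟨i, hi, hio, hie⟩ := hE13
    refine ⟨i, hi, hio, ?_⟩
    have hww : w13 = v3 := Fin.ext (by omega)
    rw [hie, hww, Sym2.eq_swap]
  -- the forced chain of non-matching edges (2t, 2t+5)
  have hchain : ∀ t : ℕ, 2*t + 6 ≤ k → ∃ x y : Fin k, x.val = 2*t ∧ y.val = 2*t + 5 ∧
      ∃ i, i < m ∧ i % 2 = 1 ∧ s(c i, c (i+1)) = s(x, y) := by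
    intro t
    induction t using Nat.strong_induction_on with
    | _ t ih =>
      intro htk
      have hOn2t : ∃ j, j < m ∧ (c j).val = 2*t := by
        rcases Nat.lt_or_ge t 2 with ht2 | ht2
        · have ht01 : t = 0 ∨ t = 1 := by omega
          rcases ht01 with rfl | rfl
          · exact ⟨j0, hj0, by omega⟩
          · obtain ⟨j, hj, hjv⟩ := hOn2
            exact ⟨j, hj, by omega⟩
        · obtain ⟨x, y, hx, hy, i, hi, hio, hie⟩ := ih (t-2) (by omega) (by omega)
          obtain ⟨j, hj, hjy⟩ := (hEon i hi x y hie).2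
          have haux : (c j).val = y.val := congrArg Fin.val hjy
          obtain ⟨j', hj', hj'v⟩ := hpartner_odd (c j) ⟨j, hj, rfl⟩ (by omega)
          exact ⟨j', hj', by omega⟩
      obtain ⟨ja, hja, hjav⟩ := hOn2t
      obtain ⟨w, hwOn, hadjw, hnMw, hEw⟩ := hOddE_ex (c ja) ⟨ja, hja, rfl⟩
      have hQ := (S19adj_iff hk2 hk4 (c ja) w).mp hadjw
      have hnM' : ¬(((c ja).val % 2 = 0 ∧ w.val = (c ja).val + 1) ∨
          (w.val % 2 = 0 ∧ (c ja).val = w.val + 1)) :=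
        fun hh => hnMw ((S19mem_M _ w).mpr hh)
      have hwlt := w.isLt
      have hwv : w.val = 2*t + 3 ∨ w.val = 2*t + 5 := by
        unfold S19Q at hQ; omega
      have hEw' : ∃ i, i < m ∧ i % 2 = 1 ∧ s(c i, c (i+1)) = s(w, c ja) := by
        obtain ⟨i, hi, hio, hie⟩ := hEw
        exact ⟨i, hi, hio, hie.trans Sym2.eq_swap⟩
      rcases hwv with h35 | h55
      · exfalso
        rcases Nat.eq_zero_or_pos t with rfl | htpos
        · have hwv3 : w = v3 := Fin.ext (by omega)
          have hE2 : ∃ i, i < m ∧ i % 2 = 1 ∧ s(c i, c (i+1)) = s(w, v1) := by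
            obtain ⟨i, hi, hio, hie⟩ := hE13'
            exact ⟨i, hi, hio, by rw [hie, hwv3]⟩
          have := hOddE_uniq w (c ja) v1 hEw' hE2
          have := congrArg Fin.val this
          omega
        · obtain ⟨x', y', hx', hy', i', hi', hio', hie'⟩ := ih (t-1) (by omega) (by omega)
          have hwy : y' = w := Fin.ext (by omega)
          have hE2 : ∃ i, i < m ∧ i % 2 = 1 ∧ s(c i, c (i+1)) = s(w, x') := by
            refine ⟨i', hi', hio', ?_⟩
            rw [hie', ← hwy, Sym2.eq_swap]
          have := hOddE_uniq w (c ja) x' hEw' hE2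
          have := congrArg Fin.val this
          omega
      · exact ⟨c ja, w, hjav, h55, hEw⟩
  -- every vertex is on the cycle
  have hall : ∀ v : Fin k, ∃ j, j < m ∧ c j = v := by
    intro v
    have hvlt := v.isLt
    by_cases ha3 : v.val ≤ 3
    · have hc : v.val = 0 ∨ v.val = 1 ∨ v.val = 2 ∨ v.val = 3 := by omega
      rcases hc with h | h | h | h
      · exact ⟨j0, hj0, Fin.ext (by omega)⟩
      · exact ⟨j1, hj1, Fin.ext (by omega)⟩
      · obtain ⟨j, hj, hjv⟩ := hOn2
        exact ⟨j, hj, Fin.ext (by omega)⟩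
      · obtain ⟨j, hj, hjv⟩ := hOn3
        exact ⟨j, hj, hjv.trans (Fin.ext (by omega))⟩
    · rcases Nat.even_or_odd v.val with he | ho
      · have he' : v.val % 2 = 0 := Nat.even_iff.mp he
        obtain ⟨x, y, hx, hy, i, hi, hio, hie⟩ := hchain ((v.val - 4)/2) (by omega)
        obtain ⟨j, hj, hjy⟩ := (hEon i hi x y hie).2
        have haux : (c j).val = y.val := congrArg Fin.val hjy
        obtain ⟨j', hj', hj'v⟩ := hpartner_odd (c j) ⟨j, hj, rfl⟩ (by omega)
        exact ⟨j', hj', Fin.ext (by omega)⟩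
      · have ho' : v.val % 2 = 1 := Nat.odd_iff.mp ho
        obtain ⟨x, y, hx, hy, i, hi, hio, hie⟩ := hchain ((v.val - 5)/2) (by omega)
        obtain ⟨j, hj, hjy⟩ := (hEon i hi x y hie).2
        exact ⟨j, hj, hjy.trans (Fin.ext (by omega))⟩
  -- counting: the cycle visits all k vertices injectively
  classical
  have himg : (Finset.range m).image c = Finset.univ := by
    apply Finset.eq_univ_iff_forall.mpr
    intro v
    obtain ⟨j, hj, hjv⟩ := hall v
    exact Finset.mem_image.mpr ⟨j, Finset.mem_range.mpr hj, hjv⟩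
  have hcard : ((Finset.range m).image c).card = m := by
    rw [Finset.card_image_of_injOn, Finset.card_range]
    intro i hi j hj hij
    exact hinj i j (Finset.mem_range.mp hi) (Finset.mem_range.mp hj) hij
  rw [himg, Finset.card_univ, Fintype.card_fin] at hcard
  omega

theorem stmt19 (k : ℕ) (hk : Even k) (hk4 : 4 ≤ k) :
    ∃ (N : ℕ) (G : SimpleGraph (Fin N)) (M : Set (Sym2 (Fin N))),
      (∃ lt : Fin N → Fin N → Prop, IsStrictTotalOrder (Fin N) lt ∧
        ∀ u v w : Fin N, lt u v → lt v w →
          ((G.Adj u v → G.Adj v w → G.Adj u w) ∧ (G.Adj u w → G.Adj u v ∨ G.Adj v w))) ∧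
      IsMatchingSet G M ∧
      (∃ n, IsAltCycle G M n) ∧
      (∀ n, IsAltCycle G M n → n = k) := by
  obtain ⟨q, hq⟩ := hk
  have hkq : k = 2*q := by omega
  have hq2 : 2 ≤ q := by omega
  exact ⟨k, S19G k, S19M k,
    ⟨(· < ·), inferInstance, S19trans k⟩,
    S19matching k (by omega) (by omega),
    ⟨k, S19exists k q hkq hq2⟩,
    fun n hn => S19unique k q n hkq hq2 hn⟩
end
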